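/- arXiv:2512.05569 — 7 statements merged into one kernel-verified Lean document; each statement's English description precedes it below -/
import Mathlib

section
/- Let λ₁, λ₂ ≥ 1 be real numbers and let d ≥ 0 be an integer. Then the sums S(n) = Σ_{k=1}^{n} (n−k)^d · λ₁^k · λ₂^{n−k} satisfy: S(n) ≍ λ₁^n if λ₁ > λ₂; S(n) ≍ n^d λ₂^n if λ₂ > λ₁; and S(n) ≍ n^{d+1} λ₂^n if λ₁ = λ₂. -/
/-- `f(n) ≍ n^d λ^n`: there is `C > 0` with
`(1/C)·n^d·λ^n − C ≤ f(n) ≤ C·n^d·λ^n + C` for all `n ≥ 1`. -/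
def GrowsLike (f : ℕ → ℝ) (d : ℕ) (lam : ℝ) : Prop :=
  ∃ C : ℝ, 0 < C ∧ ∀ n : ℕ, 1 ≤ n →
    (1 / C) * (n : ℝ) ^ d * lam ^ n - C ≤ f n ∧ f n ≤ C * (n : ℝ) ^ d * lam ^ n + C

lemma reindex (d n : ℕ) (a b : ℝ) :
    ∑ k ∈ Finset.Icc 1 n, ((n - k : ℕ) : ℝ) ^ d * a ^ k * b ^ (n - k)
      = ∑ j ∈ Finset.range n, (j : ℝ) ^ d * a ^ (n - j) * b ^ j := by
  apply Finset.sum_nbij' (i := fun k => n - k) (j := fun j => n - j)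
  · intro k hk; simp only [Finset.mem_Icc] at hk; simp only [Finset.mem_range]; omega
  · intro j hj; simp only [Finset.mem_range] at hj; simp only [Finset.mem_Icc]; omega
  · intro k hk; simp only [Finset.mem_Icc] at hk; omega
  · intro j hj; simp only [Finset.mem_range] at hj; omega
  · intro k hk; simp only [Finset.mem_Icc] at hk
    have : n - (n - k) = k := by omega
    rw [show n - (n - k) = k by omega]

lemma f_nonneg (lam₁ lam₂ : ℝ) (h₁ : 0 ≤ lam₁) (h₂ : 0 ≤ lam₂) (d n : ℕ) :
    0 ≤ ∑ k ∈ Finset.Icc 1 n, ((n - k : ℕ) : ℝ) ^ d * lam₁ ^ k * lam₂ ^ (n - k) := by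
  apply Finset.sum_nonneg; intro k _; positivity

lemma caseA (lam₁ lam₂ : ℝ) (h₁ : 1 ≤ lam₁) (h₂ : 1 ≤ lam₂) (d : ℕ) (h : lam₂ < lam₁) :
    GrowsLike (fun n => ∑ k ∈ Finset.Icc 1 n, ((n - k : ℕ) : ℝ) ^ d * lam₁ ^ k * lam₂ ^ (n - k))
      0 lam₁ := by
  have hl1 : (0:ℝ) < lam₁ := by linarith
  have hl2 : (0:ℝ) < lam₂ := by linarith
  set r : ℝ := lam₂ / lam₁ with hr
  have hr0 : 0 < r := div_pos hl2 hl1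
  have hr1 : r < 1 := (div_lt_one hl1).2 h
  have hsummable : Summable (fun j : ℕ => (j:ℝ)^d * r^j) := by
    apply summable_pow_mul_geometric_of_norm_lt_one
    rw [Real.norm_eq_abs, abs_of_nonneg hr0.le]; exact hr1
  set T : ℝ := ∑' j : ℕ, (j:ℝ)^d * r^j with hT
  have hT0 : 0 ≤ T := tsum_nonneg (fun j => by positivity)
  have h1r : 0 < 1/r := by positivity
  set C : ℝ := lam₁ + 1/r + T with hC
  clear_value T C
  have hCpos : 0 < C := by linarith
  have hC1 : 1 ≤ C := by linarith
  have hCl : lam₁ ≤ C := by linarith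
  have hCT : T ≤ C := by linarith
  have hCr : 1/C ≤ r := by
    have h1 : 1/r ≤ C := by linarith
    rw [div_le_iff₀ hr0] at h1
    rw [div_le_iff₀ hCpos]
    nlinarith
  have key : ∀ n : ℕ, (∑ k ∈ Finset.Icc 1 n, ((n - k : ℕ) : ℝ) ^ d * lam₁ ^ k * lam₂ ^ (n - k))
      = lam₁ ^ n * ∑ j ∈ Finset.range n, (j:ℝ)^d * r^j := by
    intro n
    rw [reindex, Finset.mul_sum]
    apply Finset.sum_congr rfl
    intro j hj
    have hjn : j ≤ n := (Finset.mem_range.1 hj).le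
    rw [pow_sub₀ _ (ne_of_gt hl1) hjn, hr, div_pow]
    field_simp
  refine ⟨C, hCpos, fun n hn => ?_⟩
  have hgT : ∑ j ∈ Finset.range n, (j:ℝ)^d * r^j ≤ T := by
    rw [hT]; exact Summable.sum_le_tsum _ (fun i _ => by positivity) hsummable
  have hlpow : (0:ℝ) < lam₁ ^ n := by positivity
  constructor
  · rcases eq_or_lt_of_le hn with hn1 | hn2
    · -- n = 1
      have hf0 : 0 ≤ ∑ k ∈ Finset.Icc 1 n, ((n - k : ℕ) : ℝ) ^ d * lam₁ ^ k * lam₂ ^ (n - k) :=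
        f_nonneg _ _ hl1.le hl2.le d n
      have hn1' : n = 1 := hn1.symm
      subst hn1'
      simp only [pow_zero, pow_one, mul_one, one_mul]
      have h2 : (1/C) * lam₁ ≤ 1 := by
        rw [div_mul_eq_mul_div, one_mul, div_le_one hCpos]; exact hCl
      linarith
    · -- n ≥ 2
      have h1mem : 1 ∈ Finset.range n := Finset.mem_range.2 hn2
      have hsingle : r ≤ ∑ j ∈ Finset.range n, (j:ℝ)^d * r^j := by
        have := Finset.single_le_sum (f := fun j : ℕ => (j:ℝ)^d * r^j)
          (fun i _ => by positivity) h1mem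
        simpa using this
      simp only [key, pow_zero, mul_one]
      have h3 : (1/C) * lam₁ ^ n ≤ r * lam₁ ^ n :=
        mul_le_mul_of_nonneg_right hCr hlpow.le
      have h4 : lam₁ ^ n * r ≤ lam₁ ^ n * (∑ j ∈ Finset.range n, (j:ℝ)^d * r^j) :=
        mul_le_mul_of_nonneg_left hsingle hlpow.le
      nlinarith
  · simp only [key, pow_zero, mul_one]
    have h5 : lam₁ ^ n * (∑ j ∈ Finset.range n, (j:ℝ)^d * r^j) ≤ lam₁ ^ n * T :=
      mul_le_mul_of_nonneg_left hgT hlpow.le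
    have h6 : lam₁ ^ n * T ≤ lam₁ ^ n * C := mul_le_mul_of_nonneg_left hCT hlpow.le
    nlinarith

lemma caseB (lam₁ lam₂ : ℝ) (h₁ : 1 ≤ lam₁) (h₂ : 1 ≤ lam₂) (d : ℕ) (h : lam₁ < lam₂) :
    GrowsLike (fun n => ∑ k ∈ Finset.Icc 1 n, ((n - k : ℕ) : ℝ) ^ d * lam₁ ^ k * lam₂ ^ (n - k))
      d lam₂ := by
  have hl1 : (0:ℝ) < lam₁ := by linarith
  have hl2 : (0:ℝ) < lam₂ := by linarith
  set s : ℝ := lam₁ / lam₂ with hs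
  have hs0 : 0 < s := div_pos hl1 hl2
  have hs1 : s < 1 := (div_lt_one hl2).2 h
  set G : ℝ := (1 - s)⁻¹ with hG
  have hG0 : 0 < G := by rw [hG]; exact inv_pos.2 (by linarith)
  have hgeo : ∀ n : ℕ, ∑ k ∈ Finset.Icc 1 n, s^k ≤ G := by
    intro n
    have := Summable.sum_le_tsum (Finset.Icc 1 n) (fun i _ => by positivity)
      (summable_geometric_of_lt_one hs0.le hs1)
    rwa [tsum_geometric_of_lt_one hs0.le hs1] at this
  have h2d : (0:ℝ) < 2^d * lam₂ := by positivity
  set C : ℝ := 2^d * lam₂ + G with hC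
  clear_value G C
  have h2d1 : (1:ℝ) ≤ 2^d := one_le_pow₀ (by norm_num : (1:ℝ) ≤ 2)
  have hCpos : 0 < C := by linarith
  have hCl : lam₂ ≤ C := by nlinarith
  have hC1 : 1 ≤ C := by linarith
  have hC2d : 2^d * lam₂ ≤ C := by linarith
  have hGC : G ≤ C := by linarith
  have hCinv : 1/C ≤ 1/(2^d * lam₂) := one_div_le_one_div_of_le h2d hC2d
  refine ⟨C, hCpos, fun n hn => ?_⟩
  have hA : (0:ℝ) ≤ (n:ℝ)^d * lam₂^n := by positivity
  constructor
  · -- lower bound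
    rcases eq_or_lt_of_le hn with hn1 | hn2
    · have hf0 : 0 ≤ ∑ k ∈ Finset.Icc 1 n, ((n - k : ℕ) : ℝ) ^ d * lam₁ ^ k * lam₂ ^ (n - k) :=
        f_nonneg _ _ hl1.le hl2.le d n
      have hn1' : n = 1 := hn1.symm
      subst hn1'
      simp only [Nat.cast_one, one_pow, mul_one, pow_one] at hf0 ⊢
      have h2 : (1/C) * lam₂ ≤ 1 := by
        rw [div_mul_eq_mul_div, one_mul, div_le_one hCpos]; exact hCl
      linarith
    · -- n ≥ 2
      have h1mem : 1 ∈ Finset.Icc 1 n := Finset.mem_Icc.2 ⟨le_refl 1, hn⟩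
      have hsingle : ((n - 1 : ℕ) : ℝ) ^ d * lam₁ ^ 1 * lam₂ ^ (n - 1)
          ≤ ∑ k ∈ Finset.Icc 1 n, ((n - k : ℕ) : ℝ) ^ d * lam₁ ^ k * lam₂ ^ (n - k) :=
        Finset.single_le_sum (f := fun k => ((n - k : ℕ) : ℝ) ^ d * lam₁ ^ k * lam₂ ^ (n - k))
          (fun i _ => by positivity) h1mem
      have hn2R : (2:ℝ) ≤ (n:ℝ) := by exact_mod_cast hn2
      have hcast : (n:ℝ)/2 ≤ ((n - 1 : ℕ) : ℝ) := by
        rw [Nat.cast_sub hn]; push_cast; linarith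
      have hpow : ((n:ℝ)/2)^d ≤ ((n - 1 : ℕ) : ℝ)^d :=
        pow_le_pow_left₀ (by positivity) hcast d
      have hlampow : lam₂ ^ (n-1) = lam₂^n * (lam₂^1)⁻¹ := pow_sub₀ _ (ne_of_gt hl2) hn
      have ht : (1/(2^d * lam₂)) * ((n:ℝ)^d * lam₂^n)
          ≤ ((n - 1 : ℕ) : ℝ) ^ d * lam₁ ^ 1 * lam₂ ^ (n - 1) := by
        have heq : (1/(2^d * lam₂)) * ((n:ℝ)^d * lam₂^n)
            = ((n:ℝ)/2)^d * 1 * (lam₂^n * (lam₂^1)⁻¹) := by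
          rw [div_pow]; field_simp
        rw [heq, hlampow]
        have hpos : (0:ℝ) ≤ lam₂^n * (lam₂^1)⁻¹ := by positivity
        apply mul_le_mul_of_nonneg_right _ hpos
        calc ((n:ℝ)/2)^d * 1 ≤ ((n - 1 : ℕ) : ℝ)^d * 1 := by
              apply mul_le_mul_of_nonneg_right hpow; norm_num
          _ ≤ ((n - 1 : ℕ) : ℝ)^d * lam₁ ^ 1 := by
              apply mul_le_mul_of_nonneg_left (by rw [pow_one]; exact h₁) (by positivity)
      have hstep : (1/C) * ((n:ℝ)^d * lam₂^n) ≤ (1/(2^d * lam₂)) * ((n:ℝ)^d * lam₂^n) :=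
        mul_le_mul_of_nonneg_right hCinv hA
      have : (1/C) * (n:ℝ)^d * lam₂^n = (1/C) * ((n:ℝ)^d * lam₂^n) := by ring
      rw [this]
      linarith
  · -- upper bound
    have hub : ∀ k ∈ Finset.Icc 1 n, ((n - k : ℕ) : ℝ) ^ d * lam₁ ^ k * lam₂ ^ (n - k)
        ≤ (n:ℝ)^d * lam₂^n * s^k := by
      intro k hk
      have hkn : k ≤ n := (Finset.mem_Icc.1 hk).2
      have heq : lam₁ ^ k * lam₂ ^ (n - k) = s^k * lam₂^n := by
        have hl : lam₁ = s * lam₂ := by rw [hs]; field_simp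
        rw [hl, mul_pow, mul_assoc, ← pow_add, Nat.add_sub_cancel' hkn]
      have hnk : ((n - k : ℕ) : ℝ)^d ≤ (n:ℝ)^d := by
        apply pow_le_pow_left₀ (by positivity)
        exact_mod_cast Nat.sub_le n k
      calc ((n - k : ℕ) : ℝ) ^ d * lam₁ ^ k * lam₂ ^ (n - k)
          = ((n - k : ℕ) : ℝ) ^ d * (s^k * lam₂^n) := by rw [mul_assoc, heq]
        _ ≤ (n:ℝ)^d * (s^k * lam₂^n) :=
            mul_le_mul_of_nonneg_right hnk (by positivity)
        _ = (n:ℝ)^d * lam₂^n * s^k := by ring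
    have hsum : ∑ k ∈ Finset.Icc 1 n, ((n - k : ℕ) : ℝ) ^ d * lam₁ ^ k * lam₂ ^ (n - k)
        ≤ (n:ℝ)^d * lam₂^n * ∑ k ∈ Finset.Icc 1 n, s^k := by
      rw [Finset.mul_sum]; exact Finset.sum_le_sum hub
    have h7 : ((n:ℝ)^d * lam₂^n) * (∑ k ∈ Finset.Icc 1 n, s^k) ≤ ((n:ℝ)^d * lam₂^n) * G :=
      mul_le_mul_of_nonneg_left (hgeo n) hA
    have h8 : ((n:ℝ)^d * lam₂^n) * G ≤ ((n:ℝ)^d * lam₂^n) * C :=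
      mul_le_mul_of_nonneg_left hGC hA
    have h9 : C * (n:ℝ)^d * lam₂^n = ((n:ℝ)^d * lam₂^n) * C := by ring
    rw [h9]
    linarith

lemma reindex' (d n : ℕ) (a b : ℝ) :
    ∑ k ∈ Finset.Icc 1 n, ((n - k : ℕ) : ℝ) ^ d * a ^ k * b ^ (n - k)
      = ∑ j ∈ Finset.range n, (j : ℝ) ^ d * a ^ (n - j) * b ^ j := by
  apply Finset.sum_nbij' (i := fun k => n - k) (j := fun j => n - j)
  · intro k hk; simp only [Finset.mem_Icc] at hk; simp only [Finset.mem_range]; omega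
  · intro j hj; simp only [Finset.mem_range] at hj; simp only [Finset.mem_Icc]; omega
  · intro k hk; simp only [Finset.mem_Icc] at hk; omega
  · intro j hj; simp only [Finset.mem_range] at hj; omega
  · intro k hk; simp only [Finset.mem_Icc] at hk
    rw [show n - (n - k) = k by omega]

lemma f_nonneg' (lam₁ lam₂ : ℝ) (h₁ : 0 ≤ lam₁) (h₂ : 0 ≤ lam₂) (d n : ℕ) :
    0 ≤ ∑ k ∈ Finset.Icc 1 n, ((n - k : ℕ) : ℝ) ^ d * lam₁ ^ k * lam₂ ^ (n - k) := by
  apply Finset.sum_nonneg; intro k _; positivity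

lemma caseC (lam : ℝ) (h₂ : 1 ≤ lam) (d : ℕ) :
    GrowsLike (fun n => ∑ k ∈ Finset.Icc 1 n, ((n - k : ℕ) : ℝ) ^ d * lam ^ k * lam ^ (n - k))
      (d + 1) lam := by
  have hl : (0:ℝ) < lam := by linarith
  have h4 : (0:ℝ) < 4^(d+1) := by positivity
  set C : ℝ := 4^(d+1) + lam with hC
  clear_value C
  have h41 : (1:ℝ) ≤ 4^(d+1) := one_le_pow₀ (by norm_num : (1:ℝ) ≤ 4)
  have hCpos : 0 < C := by linarith
  have hC1 : 1 ≤ C := by linarith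
  have hCl : lam ≤ C := by linarith
  have hC4 : 4^(d+1) ≤ C := by linarith
  have hCinv : 1/C ≤ 1/4^(d+1) := one_div_le_one_div_of_le h4 hC4
  have key : ∀ n : ℕ, (∑ k ∈ Finset.Icc 1 n, ((n - k : ℕ) : ℝ) ^ d * lam ^ k * lam ^ (n - k))
      = lam ^ n * ∑ j ∈ Finset.range n, (j:ℝ)^d := by
    intro n
    rw [reindex', Finset.mul_sum]
    apply Finset.sum_congr rfl
    intro j hj
    have hjn : j ≤ n := (Finset.mem_range.1 hj).le
    rw [mul_assoc, ← pow_add, Nat.sub_add_cancel hjn]; ring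
  refine ⟨C, hCpos, fun n hn => ?_⟩
  have hlpow : (0:ℝ) < lam ^ n := by positivity
  have hP0 : (0:ℝ) ≤ ∑ j ∈ Finset.range n, (j:ℝ)^d :=
    Finset.sum_nonneg (fun j _ => by positivity)
  constructor
  · rcases eq_or_lt_of_le hn with hn1 | hn2
    · have hf0 : 0 ≤ ∑ k ∈ Finset.Icc 1 n, ((n - k : ℕ) : ℝ) ^ d * lam ^ k * lam ^ (n - k) :=
        f_nonneg' _ _ hl.le hl.le d n
      have hn1' : n = 1 := hn1.symm
      subst hn1'
      simp only [Nat.cast_one, one_pow, mul_one, pow_one] at hf0 ⊢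
      have h2 : (1/C) * lam ≤ 1 := by
        rw [div_mul_eq_mul_div, one_mul, div_le_one hCpos]; exact hCl
      linarith
    · -- n ≥ 2 lower bound
      have hn2R : (2:ℝ) ≤ (n:ℝ) := by exact_mod_cast hn2
      -- P n ≥ (n/4)^(d+1)
      have hsub : Finset.Ico (n/2) n ⊆ Finset.range n := by
        intro x hx; simp only [Finset.mem_Ico] at hx; exact Finset.mem_range.2 hx.2
      have hhalf : (n:ℝ)/4 ≤ ((n/2 : ℕ) : ℝ) := by
        have : n ≤ 4 * (n/2) := by omega
        have := (Nat.cast_le (α := ℝ)).2 this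
        push_cast at this; linarith
      have hcard : ((n - n/2 : ℕ) : ℝ) ≥ (n:ℝ)/4 := by
        have : n ≤ 4 * (n - n/2) := by omega
        have := (Nat.cast_le (α := ℝ)).2 this
        push_cast at this; linarith
      have hlow : ((n:ℝ)/4)^(d+1) ≤ ∑ j ∈ Finset.range n, (j:ℝ)^d := by
        have hstep : ((n - n/2 : ℕ) : ℝ) * ((n/2 : ℕ) : ℝ)^d
            ≤ ∑ j ∈ Finset.Ico (n/2) n, (j:ℝ)^d := by
          have := Finset.card_nsmul_le_sum (Finset.Ico (n/2) n) (fun j => (j:ℝ)^d)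
            (((n/2 : ℕ) : ℝ)^d) (fun x hx => by
              apply pow_le_pow_left₀ (by positivity)
              exact_mod_cast (Finset.mem_Ico.1 hx).1)
          rwa [Nat.card_Ico, nsmul_eq_mul] at this
        have hsub2 : ∑ j ∈ Finset.Ico (n/2) n, (j:ℝ)^d ≤ ∑ j ∈ Finset.range n, (j:ℝ)^d :=
          Finset.sum_le_sum_of_subset_of_nonneg hsub (fun i _ _ => by positivity)
        have hmul : ((n:ℝ)/4)^(d+1) ≤ ((n - n/2 : ℕ) : ℝ) * ((n/2 : ℕ) : ℝ)^d := by
          rw [pow_succ, mul_comm (((n:ℝ)/4)^d)]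
          exact mul_le_mul hcard (pow_le_pow_left₀ (by positivity) hhalf d)
            (by positivity) (by positivity)
        linarith
      have hkey := key n
      simp only [hkey]
      have hfin : (1/C) * (n:ℝ)^(d+1) ≤ ((n:ℝ)/4)^(d+1) := by
        have heq : ((n:ℝ)/4)^(d+1) = (1/4^(d+1)) * (n:ℝ)^(d+1) := by
          rw [div_pow]; ring
        rw [heq]
        exact mul_le_mul_of_nonneg_right hCinv (by positivity)
      have hmono : lam^n * (((n:ℝ)/4)^(d+1)) ≤ lam^n * ∑ j ∈ Finset.range n, (j:ℝ)^d :=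
        mul_le_mul_of_nonneg_left hlow hlpow.le
      have hfin2 : (1/C) * (n:ℝ)^(d+1) * lam^n ≤ ((n:ℝ)/4)^(d+1) * lam^n :=
        mul_le_mul_of_nonneg_right hfin hlpow.le
      nlinarith
  · -- upper bound
    have hup : ∑ j ∈ Finset.range n, (j:ℝ)^d ≤ (n:ℝ)^(d+1) := by
      have := Finset.sum_le_card_nsmul (Finset.range n) (fun j => (j:ℝ)^d) ((n:ℝ)^d)
        (fun x hx => by
          apply pow_le_pow_left₀ (by positivity)
          exact_mod_cast (Finset.mem_range.1 hx).le)
      rw [Finset.card_range, nsmul_eq_mul] at this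
      calc ∑ j ∈ Finset.range n, (j:ℝ)^d ≤ (n:ℝ) * (n:ℝ)^d := this
        _ = (n:ℝ)^(d+1) := by rw [pow_succ]; ring
    have hkey := key n
    simp only [hkey]
    have h5 : lam^n * (∑ j ∈ Finset.range n, (j:ℝ)^d) ≤ lam^n * (n:ℝ)^(d+1) :=
      mul_le_mul_of_nonneg_left hup hlpow.le
    have h6 : lam^n * (n:ℝ)^(d+1) ≤ lam^n * (C * (n:ℝ)^(d+1)) := by
      apply mul_le_mul_of_nonneg_left _ hlpow.le
      nlinarith [pow_nonneg (Nat.cast_nonneg n : (0:ℝ) ≤ n) (d+1)]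
    nlinarith

theorem stmt2 (lam₁ lam₂ : ℝ) (h₁ : 1 ≤ lam₁) (h₂ : 1 ≤ lam₂) (d : ℕ) :
    (lam₂ < lam₁ →
      GrowsLike (fun n => ∑ k ∈ Finset.Icc 1 n, ((n - k : ℕ) : ℝ) ^ d * lam₁ ^ k * lam₂ ^ (n - k))
        0 lam₁) ∧
    (lam₁ < lam₂ →
      GrowsLike (fun n => ∑ k ∈ Finset.Icc 1 n, ((n - k : ℕ) : ℝ) ^ d * lam₁ ^ k * lam₂ ^ (n - k))
        d lam₂) ∧
    (lam₁ = lam₂ →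
      GrowsLike (fun n => ∑ k ∈ Finset.Icc 1 n, ((n - k : ℕ) : ℝ) ^ d * lam₁ ^ k * lam₂ ^ (n - k))
        (d + 1) lam₂) := by
  refine ⟨fun h => caseA lam₁ lam₂ h₁ h₂ d h, fun h => caseB lam₁ lam₂ h₁ h₂ d h, fun h => ?_⟩
  subst h
  exact caseC lam₁ h₁ d
end

section
/- Let G be a group generated by a finite set S, with word length |·| and conjugacy length ‖·‖. Let φ ∈ Aut(G), g ∈ G, k ≥ 1, d ∈ ℕ and λ ≥ 1. Then |φ^n(g)| ≍ n^d λ^n if and only if |(φ^k)^n(g)| ≍ n^d (λ^k)^n, and likewise ‖φ^n(g)‖ ≍ n^d λ^n if and only if ‖(φ^k)^n(g)‖ ≍ n^d (λ^k)^n. -/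
/-- Word length of `g` with respect to `S ∪ S⁻¹`. -/
noncomputable def wLen {G : Type*} [Group G] (S : Finset G) (g : G) : ℕ :=
  sInf {n | ∃ l : List G, l.length = n ∧ (∀ x ∈ l, x ∈ S ∨ x⁻¹ ∈ S) ∧ l.prod = g}

/-- Conjugacy length: `‖g‖ = min_{h} |h g h⁻¹|`. -/
noncomputable def cLen {G : Type*} [Group G] (S : Finset G) (g : G) : ℕ :=
  sInf {n | ∃ h : G, wLen S (h * g * h⁻¹) = n}

lemma lower_helper {X fn C : ℝ} (hC : 0 < C) (h : X ≤ C * fn + C * C) :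
    1/C * X - C ≤ fn := by
  rw [sub_le_iff_le_add, one_div, inv_mul_le_iff₀ hC, mul_add]
  linarith

lemma lb_mono {C C' X X' fx : ℝ} (hC : 0 < C) (hCC' : C ≤ C') (hX : 0 ≤ X') (hXX' : X' ≤ X)
    (h : 1/C * X - C ≤ fx) : 1/C' * X' - C' ≤ fx := by
  have hC' : 0 < C' := lt_of_lt_of_le hC hCC'
  have e1 : 1/C' * X' ≤ 1/C * X :=
    mul_le_mul (one_div_le_one_div_of_le hC hCC') hXX' hX (by positivity)
  linarith

lemma growsLike_transfer (k d : ℕ) (hk : 1 ≤ k) (lam : ℝ) (hlam : 1 ≤ lam)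
    (f : ℕ → ℝ) (hf : ∀ n, 0 ≤ f n) (M : ℝ) (hM : 1 ≤ M)
    (h1 : ∀ n, f (n+1) ≤ M * f n) (h2 : ∀ n, f n ≤ M * f (n+1)) :
    GrowsLike f d lam ↔ GrowsLike (fun n => f (k*n)) d (lam^k) := by
  have hlam0 : (0:ℝ) < lam := by linarith
  have hM0 : (0:ℝ) < M := by linarith
  have hK1 : (1:ℝ) ≤ (k:ℝ) := by exact_mod_cast hk
  have hK0 : (0:ℝ) < (k:ℝ) := by linarith
  have hkd1 : (1:ℝ) ≤ (k:ℝ)^d := one_le_pow₀ hK1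
  have hlk1 : (1:ℝ) ≤ lam^k := one_le_pow₀ hlam
  have hMk1 : (1:ℝ) ≤ M^k := one_le_pow₀ hM
  have h2k1 : (1:ℝ) ≤ (2*(k:ℝ))^d := one_le_pow₀ (by linarith)
  constructor
  · rintro ⟨C, hC, h⟩
    refine ⟨C * (k:ℝ)^d, by positivity, ?_⟩
    intro n hn
    have hkn : 1 ≤ k * n := Nat.one_le_iff_ne_zero.mpr (by positivity)
    obtain ⟨hl, hu⟩ := h (k*n) hkn
    have hcast : ((k*n : ℕ) : ℝ) = (k:ℝ)*(n:ℝ) := by push_cast; ring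
    have hpow : lam ^ (k*n) = (lam^k)^n := pow_mul lam k n
    rw [hcast, hpow] at hl hu
    have hYn : (0:ℝ) ≤ (lam^k)^n := by positivity
    constructor
    · show 1/(C * (k:ℝ)^d) * (n:ℝ)^d * (lam^k)^n - C * (k:ℝ)^d ≤ f (k*n)
      rw [mul_assoc]
      rw [mul_assoc] at hl
      refine lb_mono hC (le_mul_of_one_le_right hC.le hkd1) (by positivity) ?_ hl
      refine mul_le_mul_of_nonneg_right ?_ hYn
      exact pow_le_pow_left₀ (Nat.cast_nonneg n) (by nlinarith [Nat.cast_nonneg (α := ℝ) n]) d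
    · show f (k*n) ≤ C * (k:ℝ)^d * (n:ℝ)^d * (lam^k)^n + C * (k:ℝ)^d
      have e : C * ((k:ℝ)*(n:ℝ))^d * (lam^k)^n = C * (k:ℝ)^d * (n:ℝ)^d * (lam^k)^n := by
        rw [mul_pow]; ring
      rw [e] at hu
      nlinarith
  · rintro ⟨C, hC, h⟩
    have H1 : ∀ n j, f (n + j) ≤ M^j * f n := by
      intro n j
      induction j with
      | zero => simp
      | succ j ih =>
        calc f (n + (j+1)) = f ((n+j) + 1) := by ring_nf
        _ ≤ M * f (n+j) := h1 _
        _ ≤ M * (M^j * f n) := mul_le_mul_of_nonneg_left ih hM0.le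
        _ = M^(j+1) * f n := by ring
    have H2 : ∀ n j, f n ≤ M^j * f (n + j) := by
      intro n j
      induction j with
      | zero => simp
      | succ j ih =>
        calc f n ≤ M^j * f (n+j) := ih
        _ ≤ M^j * (M * f ((n+j)+1)) := mul_le_mul_of_nonneg_left (h2 _) (by positivity)
        _ = M^(j+1) * f (n + (j+1)) := by ring_nf
    obtain ⟨C', hC'def⟩ : ∃ C' : ℝ,
        C' = C * M^k * (2*(k:ℝ))^d * lam^k + M^k * (f 0 + 1) + (k:ℝ)^d * lam^k + 1 := ⟨_, rfl⟩
    have hf0 : 0 ≤ f 0 := hf 0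
    have ht1 : 0 < C * M^k * (2*(k:ℝ))^d * lam^k := by positivity
    have ht2 : 0 ≤ M^k * (f 0 + 1) := by nlinarith
    have ht3 : 0 < (k:ℝ)^d * lam^k := by positivity
    have hC' : 0 < C' := by rw [hC'def]; linarith
    have hC'1 : 1 ≤ C' := by rw [hC'def]; linarith
    refine ⟨C', hC', ?_⟩
    intro n hn
    by_cases hnk : n < k
    · -- small n
      have hfu : f n ≤ M^k * f 0 := by
        have e1 : f n ≤ M^n * f 0 := by simpa using H1 0 n
        have e2 : M^n ≤ M^k := pow_le_pow_right₀ hM (le_of_lt hnk)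
        nlinarith
      have hnK : (n:ℝ) ≤ (k:ℝ) := by exact_mod_cast le_of_lt hnk
      have hX : (n:ℝ)^d * lam^n ≤ (k:ℝ)^d * lam^k :=
        mul_le_mul (pow_le_pow_left₀ (Nat.cast_nonneg n) hnK d)
          (pow_le_pow_right₀ hlam (le_of_lt hnk)) (by positivity) (by positivity)
      constructor
      · have h1C' : 1/C' ≤ 1 := by rw [div_le_one hC']; linarith
        have e1 : 1/C' * ((n:ℝ)^d * lam^n) ≤ 1 * ((k:ℝ)^d * lam^k) :=
          mul_le_mul h1C' hX (by positivity) (by norm_num)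
        have e2 : (k:ℝ)^d * lam^k ≤ C' := by rw [hC'def]; linarith
        have := hf n
        rw [mul_assoc]
        linarith
      · have e1 : M^k * f 0 ≤ C' := by rw [hC'def]; nlinarith
        have e2 : (0:ℝ) ≤ C' * ((n:ℝ)^d * lam^n) := by positivity
        rw [mul_assoc]
        linarith
    · push_neg at hnk
      have hk0 : 0 < k := hk
      set m := n / k with hmdef
      set r := n % k with hrdef
      have hnd : k * m + r = n := Nat.div_add_mod n k
      have hm1 : 1 ≤ m := (Nat.one_le_div_iff hk0).mpr hnk
      have hrk : r < k := Nat.mod_lt n hk0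
      obtain ⟨hl, hu⟩ := h m hm1
      dsimp only at hl hu
      have hkm : k ≤ k * m := Nat.le_mul_of_pos_right k hm1
      have e1 : f n ≤ M^k * f (k*m) := by
        have a1 : f (k*m + r) ≤ M^r * f (k*m) := H1 (k*m) r
        rw [hnd] at a1
        have a2 : M^r ≤ M^k := pow_le_pow_right₀ hM (le_of_lt hrk)
        have a3 := mul_le_mul_of_nonneg_right a2 (hf (k*m))
        linarith
      have e2 : f (k*m) ≤ M^k * f n := by
        have a1 : f (k*m) ≤ M^r * f (k*m + r) := H2 (k*m) r
        rw [hnd] at a1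
        have a2 : M^r ≤ M^k := pow_le_pow_right₀ hM (le_of_lt hrk)
        have a3 := mul_le_mul_of_nonneg_right a2 (hf n)
        linarith
      have hmn : (m:ℝ) ≤ (n:ℝ) := Nat.cast_le.mpr (Nat.div_le_self n k)
      have hmkn : (n:ℝ) ≤ 2*(k:ℝ)*(m:ℝ) := by
        have h' : n ≤ 2 * (k * m) := by omega
        have h'' := (Nat.cast_le (α := ℝ)).mpr h'
        push_cast at h''
        linarith
      have hkmn : k * m ≤ n := by omega
      have hnkm : n ≤ k * m + k := by omega
      have hpkm : lam^(k*m) ≤ lam^n := pow_le_pow_right₀ hlam hkmn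
      have hpn : lam^n ≤ lam^(k*m) * lam^k := by
        rw [← pow_add]; exact pow_le_pow_right₀ hlam hnkm
      have hYX : (m:ℝ)^d * (lam^k)^m ≤ (n:ℝ)^d * lam^n := by
        rw [← pow_mul]
        exact mul_le_mul (pow_le_pow_left₀ (Nat.cast_nonneg m) hmn d) hpkm
          (by positivity) (by positivity)
      have hXY : (n:ℝ)^d * lam^n ≤ (2*(k:ℝ))^d * lam^k * ((m:ℝ)^d * (lam^k)^m) := by
        rw [← pow_mul]
        have a1 : (n:ℝ)^d ≤ (2*(k:ℝ))^d * (m:ℝ)^d := by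
          rw [← mul_pow]
          exact pow_le_pow_left₀ (Nat.cast_nonneg n) (by push_cast; linarith [hmkn]) d
        calc (n:ℝ)^d * lam^n ≤ ((2*(k:ℝ))^d * (m:ℝ)^d) * (lam^(k*m) * lam^k) :=
          mul_le_mul a1 hpn (by positivity) (by positivity)
        _ = (2*(k:ℝ))^d * lam^k * ((m:ℝ)^d * lam^(k*m)) := by ring
      constructor
      · -- lower bound
        have hY : (m:ℝ)^d * (lam^k)^m ≤ C * f (k*m) + C*C := by
          rw [mul_assoc] at hl
          have a1 : 1/C * ((m:ℝ)^d * (lam^k)^m) ≤ f (k*m) + C := by linarith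
          have a2 := mul_le_mul_of_nonneg_left a1 hC.le
          rw [← mul_assoc, mul_one_div_cancel hC.ne', one_mul] at a2
          linarith [mul_add C (f (k*m)) C]
        have hXfn : (n:ℝ)^d * lam^n ≤
            (C * M^k * (2*(k:ℝ))^d * lam^k) * f n + (2*(k:ℝ))^d * lam^k * (C*C) := by
          have b0 := mul_le_mul_of_nonneg_left e2 hC.le
          have b1 : C * f (k*m) + C*C ≤ C * (M^k * f n) + C*C := by linarith
          have b2 : (m:ℝ)^d * (lam^k)^m ≤ C * (M^k * f n) + C*C := le_trans hY b1
          have b3 := mul_le_mul_of_nonneg_left b2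
            (show (0:ℝ) ≤ (2*(k:ℝ))^d * lam^k by positivity)
          calc (n:ℝ)^d * lam^n ≤ (2*(k:ℝ))^d * lam^k * ((m:ℝ)^d * (lam^k)^m) := hXY
          _ ≤ (2*(k:ℝ))^d * lam^k * (C * (M^k * f n) + C*C) := b3
          _ = (C * M^k * (2*(k:ℝ))^d * lam^k) * f n + (2*(k:ℝ))^d * lam^k * (C*C) := by ring
        rw [mul_assoc]
        apply lower_helper hC'
        have p1 : C ≤ C * M^k := le_mul_of_one_le_right hC.le hMk1
        have p2 : C * M^k ≤ C * M^k * (2*(k:ℝ))^d := le_mul_of_one_le_right (by positivity) h2k1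
        have p3 : C * M^k * (2*(k:ℝ))^d ≤ C * M^k * (2*(k:ℝ))^d * lam^k :=
          le_mul_of_one_le_right (by positivity) hlk1
        have hA : C * M^k * (2*(k:ℝ))^d * lam^k ≤ C' := by rw [hC'def]; linarith
        have hCC' : C ≤ C' := by linarith
        have w := mul_le_mul_of_nonneg_left hMk1
          (show (0:ℝ) ≤ (2*(k:ℝ))^d * lam^k * (C*C) by positivity)
        have w' : (2*(k:ℝ))^d * lam^k * (C*C) * M^k = (C * M^k * (2*(k:ℝ))^d * lam^k) * C := by
          ring
        have w2 := mul_le_mul hA hCC' hC.le hC'.le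
        have hB : (2*(k:ℝ))^d * lam^k * (C*C) ≤ C' * C' := by
          rw [mul_comm ((2*(k:ℝ))^d * lam^k * (C*C)) (M^k)] at w
          rw [mul_comm (M^k) ((2*(k:ℝ))^d * lam^k * (C*C))] at w
          linarith [w' ▸ w]
        have w3 := mul_le_mul_of_nonneg_right hA (hf n)
        linarith
      · -- upper bound
        rw [mul_assoc] at hu
        have b0 := mul_le_mul_of_nonneg_left hu (show (0:ℝ) ≤ M^k by positivity)
        have b1 : f n ≤ M^k * (C * ((m:ℝ)^d * (lam^k)^m) + C) := le_trans e1 b0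
        have p1 : M^k * C ≤ M^k * C * (2*(k:ℝ))^d := le_mul_of_one_le_right (by positivity) h2k1
        have p2 : M^k * C * (2*(k:ℝ))^d ≤ M^k * C * (2*(k:ℝ))^d * lam^k :=
          le_mul_of_one_le_right (by positivity) hlk1
        have hMkC : M^k * C ≤ C' := by
          rw [hC'def]
          have : M^k * C * (2*(k:ℝ))^d * lam^k = C * M^k * (2*(k:ℝ))^d * lam^k := by ring
          linarith [this ▸ p2]
        have q1 := mul_le_mul_of_nonneg_left hYX (show (0:ℝ) ≤ M^k * C by positivity)
        have q2 := mul_le_mul_of_nonneg_right hMkC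
          (show (0:ℝ) ≤ (n:ℝ)^d * lam^n by positivity)
        rw [mul_assoc]
        calc f n ≤ M^k * (C * ((m:ℝ)^d * (lam^k)^m) + C) := b1
        _ = M^k * C * ((m:ℝ)^d * (lam^k)^m) + M^k * C := by ring
        _ ≤ M^k * C * ((n:ℝ)^d * lam^n) + M^k * C := by linarith
        _ ≤ C' * ((n:ℝ)^d * lam^n) + C' := by linarith


section WL

variable {G : Type*} [Group G] (S : Finset G)


variable (hS : Subgroup.closure (S : Set G) = ⊤)
include hS

lemma wLen_set_nonempty (g : G) :
    {n | ∃ l : List G, l.length = n ∧ (∀ x ∈ l, x ∈ S ∨ x⁻¹ ∈ S) ∧ l.prod = g}.Nonempty := by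
  have hg : g ∈ (Subgroup.closure (S : Set G)).toSubmonoid := by
    rw [hS]; trivial
  rw [Subgroup.closure_toSubmonoid] at hg
  obtain ⟨l, hl, hp⟩ := Submonoid.exists_list_of_mem_closure hg
  exact ⟨l.length, l, rfl, fun x hx => by
    rcases hl x hx with h | h
    · exact Or.inl h
    · exact Or.inr (Set.mem_inv.mp h), hp⟩

lemma wLen_spec (g : G) : ∃ l : List G, l.length = wLen S g ∧
    (∀ x ∈ l, x ∈ S ∨ x⁻¹ ∈ S) ∧ l.prod = g :=
  Nat.sInf_mem (wLen_set_nonempty S hS g)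

omit hS in
lemma wLen_le (g : G) (l : List G) (h1 : ∀ x ∈ l, x ∈ S ∨ x⁻¹ ∈ S) (h2 : l.prod = g) :
    wLen S g ≤ l.length :=
  Nat.sInf_le ⟨l, rfl, h1, h2⟩

omit hS in
lemma wLen_one : wLen S (1 : G) = 0 :=
  Nat.le_zero.mp (wLen_le S 1 [] (by simp) (by simp))

lemma wLen_mul_le (a b : G) : wLen S (a * b) ≤ wLen S a + wLen S b := by
  obtain ⟨la, hla, ha1, ha2⟩ := wLen_spec S hS a
  obtain ⟨lb, hlb, hb1, hb2⟩ := wLen_spec S hS b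
  have := wLen_le S (a * b) (la ++ lb) (fun x hx => by
    rcases List.mem_append.mp hx with h | h
    · exact ha1 x h
    · exact hb1 x h) (by rw [List.prod_append, ha2, hb2])
  simpa [hla, hlb] using this

lemma wLen_inv_le (a : G) : wLen S a⁻¹ ≤ wLen S a := by
  obtain ⟨l, hl, h1, h2⟩ := wLen_spec S hS a
  have := wLen_le S a⁻¹ ((l.map fun x => x⁻¹).reverse) (fun x hx => by
    simp only [List.mem_reverse, List.mem_map] at hx
    obtain ⟨y, hy, rfl⟩ := hx
    rcases h1 y hy with h | h
    · exact Or.inr (by simpa using h)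
    · exact Or.inl h)
    (by rw [← List.prod_inv_reverse, h2])
  simpa [hl] using this

/-- There is a uniform bound `M` with `wLen (ψ x) ≤ M * wLen x`. -/
lemma wLen_bound (ψ : MulAut G) : ∃ M : ℕ, 1 ≤ M ∧ ∀ x : G, wLen S (ψ x) ≤ M * wLen S x := by
  refine ⟨(S.sup fun t => wLen S (ψ t)) + 1, Nat.le_add_left 1 _, ?_⟩
  set M := (S.sup fun t => wLen S (ψ t)) + 1 with hM
  have key : ∀ s : G, (s ∈ S ∨ s⁻¹ ∈ S) → wLen S (ψ s) ≤ M := by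
    intro s hs
    rcases hs with h | h
    · exact le_trans (Finset.le_sup (f := fun t => wLen S (ψ t)) h) (Nat.le_succ _)
    · have h1 : wLen S (ψ s⁻¹) ≤ M := le_trans (Finset.le_sup (f := fun t => wLen S (ψ t)) h) (Nat.le_succ _)
      have h2 : ψ s = (ψ s⁻¹)⁻¹ := by simp
      rw [h2]
      exact le_trans (wLen_inv_le S hS _) h1
  have main : ∀ l : List G, (∀ x ∈ l, x ∈ S ∨ x⁻¹ ∈ S) → wLen S (ψ l.prod) ≤ M * l.length := by
    intro l
    induction l with
    | nil => intro _; simp [wLen_one]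
    | cons s t ih =>
      intro h
      have hs := key s (h s (by simp))
      have ht := ih (fun x hx => h x (by simp [hx]))
      have : ψ (s * t.prod) = ψ s * ψ t.prod := map_mul ψ _ _
      rw [List.prod_cons, this]
      calc wLen S (ψ s * ψ t.prod) ≤ wLen S (ψ s) + wLen S (ψ t.prod) :=
        wLen_mul_le S hS _ _
      _ ≤ M + M * t.length := Nat.add_le_add hs ht
      _ = M * (s :: t).length := by simp [List.length_cons]; ring
  intro x
  obtain ⟨l, hl, h1, h2⟩ := wLen_spec S hS x
  rw [← hl, ← h2]
  exact main l h1


omit hS in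
lemma cLen_set_nonempty (g : G) : {n | ∃ h : G, wLen S (h * g * h⁻¹) = n}.Nonempty :=
  ⟨wLen S g, 1, by simp⟩

lemma cLen_bound (ψ : MulAut G) : ∃ M : ℕ, 1 ≤ M ∧ ∀ x : G, cLen S (ψ x) ≤ M * cLen S x := by
  obtain ⟨M, hM1, hM⟩ := wLen_bound S hS ψ
  refine ⟨M, hM1, fun x => ?_⟩
  obtain ⟨h, hh⟩ := Nat.sInf_mem (cLen_set_nonempty S x)
  have e1 : cLen S (ψ x) ≤ wLen S (ψ h * ψ x * (ψ h)⁻¹) := Nat.sInf_le ⟨ψ h, rfl⟩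
  have e2 : ψ h * ψ x * (ψ h)⁻¹ = ψ (h * x * h⁻¹) := by simp
  rw [e2] at e1
  calc cLen S (ψ x) ≤ M * wLen S (h * x * h⁻¹) := le_trans e1 (hM _)
  _ = M * cLen S x := by rw [hh]; rfl

omit hS in
lemma step_bound (len : G → ℕ) (φ : MulAut G)
    (hb : ∀ τ : MulAut G, ∃ M : ℕ, 1 ≤ M ∧ ∀ x, len (τ x) ≤ M * len x) (g : G) :
    ∃ M : ℝ, 1 ≤ M ∧ (∀ n, (len ((φ^(n+1)) g) : ℝ) ≤ M * len ((φ^n) g)) ∧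
      (∀ n, (len ((φ^n) g) : ℝ) ≤ M * len ((φ^(n+1)) g)) := by
  obtain ⟨M1, hM1, hb1⟩ := hb φ
  obtain ⟨M2, hM2, hb2⟩ := hb φ⁻¹
  refine ⟨(max M1 M2 : ℕ), by exact_mod_cast le_trans hM1 (le_max_left _ _), ?_, ?_⟩
  · intro n
    have e : (φ^(n+1)) g = φ ((φ^n) g) := by rw [pow_succ']; rfl
    have := hb1 ((φ^n) g)
    have h2 : len ((φ^(n+1)) g) ≤ max M1 M2 * len ((φ^n) g) := by
      rw [e]; exact le_trans this (Nat.mul_le_mul_right _ (le_max_left _ _))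
    exact_mod_cast h2
  · intro n
    have e : (φ^n) g = φ⁻¹ ((φ^(n+1)) g) := by
      rw [pow_succ']
      show (φ^n) g = φ⁻¹ (φ ((φ^n) g))
      simp
    have := hb2 ((φ^(n+1)) g)
    have h2 : len ((φ^n) g) ≤ max M1 M2 * len ((φ^(n+1)) g) := by
      rw [e]; exact le_trans this (Nat.mul_le_mul_right _ (le_max_right _ _))
    exact_mod_cast h2

end WL

theorem stmt6 {G : Type*} [Group G] (S : Finset G)
    (hS : Subgroup.closure (S : Set G) = ⊤) (φ : MulAut G) (g : G)
    (k : ℕ) (hk : 1 ≤ k) (d : ℕ) (lam : ℝ) (hlam : 1 ≤ lam) :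
    (GrowsLike (fun n => (wLen S ((φ ^ n) g) : ℝ)) d lam ↔
      GrowsLike (fun n => (wLen S (((φ ^ k) ^ n) g) : ℝ)) d (lam ^ k)) ∧
    (GrowsLike (fun n => (cLen S ((φ ^ n) g) : ℝ)) d lam ↔
      GrowsLike (fun n => (cLen S (((φ ^ k) ^ n) g) : ℝ)) d (lam ^ k)) := by
  constructor
  · obtain ⟨M, hM, h1, h2⟩ := step_bound (wLen S) φ (fun τ => wLen_bound S hS τ) g
    have key := growsLike_transfer k d hk lam hlam (fun n => (wLen S ((φ^n) g) : ℝ))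
      (fun n => Nat.cast_nonneg _) M hM h1 h2
    have efun : (fun n => ((wLen S (((φ ^ k) ^ n) g) : ℕ) : ℝ)) =
        fun n => ((wLen S ((φ ^ (k * n)) g) : ℕ) : ℝ) := by
      funext n; rw [pow_mul]
    rw [efun]
    exact key
  · obtain ⟨M, hM, h1, h2⟩ := step_bound (cLen S) φ (fun τ => cLen_bound S hS τ) g
    have key := growsLike_transfer k d hk lam hlam (fun n => (cLen S ((φ^n) g) : ℝ))
      (fun n => Nat.cast_nonneg _) M hM h1 h2
    have efun : (fun n => ((cLen S (((φ ^ k) ^ n) g) : ℕ) : ℝ)) =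
        fun n => ((cLen S ((φ ^ (k * n)) g) : ℕ) : ℝ) := by
      funext n; rw [pow_mul]
    rw [efun]
    exact key
end

section
/- Let X be a proper geodesic metric space, let D > 0, and let Y ⊆ X be a nonempty closed D-contracting subset. Let c be a geodesic from x to x', and let p and p' be projections of x and x' onto Y respectively. If d(x,Y) < D or d(p,p') > D, then: (1) d(c,Y) < D, i.e. some point of c lies in the D-neighborhood Y^{+D}; (2) the entry point of c in Y^{+D} (the first point of c, in the direction from x to x', lying in Y^{+D}) is at distance at most 2D from p, and the exit point (the last such point) is at distance at most 2D from p'. -/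
/-- `c : [a,b] → X` is a geodesic. -/
def IsGeodesic {X : Type*} [MetricSpace X] (c : ℝ → X) (a b : ℝ) : Prop :=
  a ≤ b ∧ ∀ s ∈ Set.Icc a b, ∀ t ∈ Set.Icc a b, dist (c s) (c t) = |s - t|

/-- Every two points are joined by a geodesic. -/
def GeodesicSpace (X : Type*) [MetricSpace X] : Prop :=
  ∀ x y : X, ∃ (a b : ℝ) (c : ℝ → X), IsGeodesic c a b ∧ c a = x ∧ c b = y

/-- The set of projections of the point `x` onto `Y`. -/
def projSet {X : Type*} [MetricSpace X] (Y : Set X) (x : X) : Set X :=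
  {p | p ∈ Y ∧ dist x p = Metric.infDist x Y}

/-- `Π_Y(Z)`: the set of projections onto `Y` of points of `Z`. -/
def projOn {X : Type*} [MetricSpace X] (Y Z : Set X) : Set X :=
  ⋃ z ∈ Z, projSet Y z

/-- The `A`-neighborhood `Y^{+A}` of `Y`. -/
def nbhd {X : Type*} [MetricSpace X] (Y : Set X) (A : ℝ) : Set X :=
  {x | Metric.infDist x Y ≤ A}

/-- `Y` is `D`-contracting: the projection onto `Y` of any geodesic staying at
distance at least `D` from `Y` has diameter at most `D`. -/
def IsContracting {X : Type*} [MetricSpace X] (D : ℝ) (Y : Set X) : Prop :=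
  ∀ (c : ℝ → X) (a b : ℝ), IsGeodesic c a b →
    (∀ t ∈ Set.Icc a b, D ≤ Metric.infDist (c t) Y) →
    EMetric.diam (projOn Y (c '' Set.Icc a b)) ≤ ENNReal.ofReal D

lemma aux_entry {X : Type*} [MetricSpace X] [ProperSpace X] {D : ℝ} (hD : 0 < D)
    {Y : Set X} (hYne : Y.Nonempty) (hYcl : IsClosed Y) (hY : IsContracting D Y)
    {c : ℝ → X} {a b t₀ : ℝ} (hc : IsGeodesic c a b) (ht₀ : t₀ ∈ Set.Icc a b)
    {p : X} (hp : p ∈ projSet Y (c a))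
    (hle : Metric.infDist (c t₀) Y ≤ D)
    (hgt : ∀ t ∈ Set.Ico a t₀, D < Metric.infDist (c t) Y) :
    dist (c t₀) p ≤ 2 * D := by
  rcases eq_or_lt_of_le ht₀.1 with heq | hlt
  · rw [heq] at hp
    calc dist (c t₀) p = Metric.infDist (c t₀) Y := hp.2
    _ ≤ D := hle
    _ ≤ 2 * D := by linarith
  · -- a < t₀
    have hsub : Set.Icc a t₀ ⊆ Set.Icc a b := Set.Icc_subset_Icc le_rfl ht₀.2
    have hgeo : IsGeodesic c a t₀ :=
      ⟨ht₀.1, fun s hs t ht => hc.2 s (hsub hs) t (hsub ht)⟩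
    -- distance at t₀ is at least D
    have hDt₀ : D ≤ Metric.infDist (c t₀) Y := by
      refine le_of_forall_pos_le_add fun ε hε => ?_
      set t := max a (t₀ - ε) with htdef
      have ht1 : t ∈ Set.Ico a t₀ := ⟨le_max_left _ _, max_lt hlt (by linarith)⟩
      have htb : t ∈ Set.Icc a b := ⟨ht1.1, ht1.2.le.trans ht₀.2⟩
      have hd : dist (c t) (c t₀) ≤ ε := by
        rw [hc.2 t htb t₀ ht₀]
        rw [abs_le]
        constructor
        · have : t₀ - ε ≤ t := le_max_right _ _
          linarith
        · linarith [ht1.2.le]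
      have := hgt t ht1
      have h2 : Metric.infDist (c t) Y ≤ Metric.infDist (c t₀) Y + dist (c t) (c t₀) :=
        Metric.infDist_le_infDist_add_dist
      linarith
    have hall : ∀ t ∈ Set.Icc a t₀, D ≤ Metric.infDist (c t) Y := by
      intro t ht
      rcases eq_or_lt_of_le ht.2 with rfl | h
      · exact hDt₀
      · exact (hgt t ⟨ht.1, h⟩).le
    have hdiam := hY c a t₀ hgeo hall
    obtain ⟨q, hqY, hq⟩ := hYcl.exists_infDist_eq_dist hYne (c t₀)
    have hpmem : p ∈ projOn Y (c '' Set.Icc a t₀) := by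
      refine Set.mem_biUnion (Set.mem_image_of_mem c (Set.left_mem_Icc.2 ht₀.1)) hp
    have hqmem : q ∈ projOn Y (c '' Set.Icc a t₀) := by
      refine Set.mem_biUnion (Set.mem_image_of_mem c (Set.right_mem_Icc.2 ht₀.1)) ⟨hqY, hq.symm⟩
    have hpq : dist p q ≤ D := by
      rw [← edist_le_ofReal hD.le]
      exact le_trans (EMetric.edist_le_diam_of_mem hpmem hqmem) hdiam
    have hdq : dist (c t₀) q ≤ D := hq ▸ hle
    calc dist (c t₀) p ≤ dist (c t₀) q + dist q p := dist_triangle _ _ _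
    _ ≤ D + D := by rw [dist_comm q p]; linarith
    _ = 2 * D := by ring

theorem stmt10 {X : Type*} [MetricSpace X] [ProperSpace X] (hX : GeodesicSpace X)
    (D : ℝ) (hD : 0 < D) (Y : Set X) (hYne : Y.Nonempty) (hYcl : IsClosed Y)
    (hY : IsContracting D Y)
    (c : ℝ → X) (a b : ℝ) (x x' : X) (hc : IsGeodesic c a b)
    (hca : c a = x) (hcb : c b = x')
    (p p' : X) (hp : p ∈ projSet Y x) (hp' : p' ∈ projSet Y x')
    (hyp : Metric.infDist x Y < D ∨ D < dist p p') :
    (∃ t ∈ Set.Icc a b, Metric.infDist (c t) Y < D) ∧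
    dist (c (sInf {t | t ∈ Set.Icc a b ∧ c t ∈ nbhd Y D})) p ≤ 2 * D ∧
    dist (c (sSup {t | t ∈ Set.Icc a b ∧ c t ∈ nbhd Y D})) p' ≤ 2 * D := by
  subst hca hcb
  have hab := hc.1
  -- Part 1
  have h1 : ∃ t ∈ Set.Icc a b, Metric.infDist (c t) Y < D := by
    by_contra h
    push_neg at h
    have hdiam := hY c a b hc h
    have hpmem : p ∈ projOn Y (c '' Set.Icc a b) :=
      Set.mem_biUnion (Set.mem_image_of_mem c (Set.left_mem_Icc.2 hab)) hp
    have hp'mem : p' ∈ projOn Y (c '' Set.Icc a b) :=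
      Set.mem_biUnion (Set.mem_image_of_mem c (Set.right_mem_Icc.2 hab)) hp'
    have hpp' : dist p p' ≤ D := by
      rw [← edist_le_ofReal hD.le]
      exact le_trans (EMetric.edist_le_diam_of_mem hpmem hp'mem) hdiam
    rcases hyp with h' | h'
    · exact absurd (h a (Set.left_mem_Icc.2 hab)) (not_le.2 h')
    · linarith
  set S : Set ℝ := {t | t ∈ Set.Icc a b ∧ c t ∈ nbhd Y D} with hSdef
  obtain ⟨tw, htw, htwD⟩ := h1
  have hSne : S.Nonempty := ⟨tw, htw, htwD.le⟩
  have hSsub : S ⊆ Set.Icc a b := fun t ht => ht.1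
  have hSbddB : BddBelow S := ⟨a, fun t ht => (hSsub ht).1⟩
  have hSbddA : BddAbove S := ⟨b, fun t ht => (hSsub ht).2⟩
  set t₀ := sInf S with ht₀def
  set t₁ := sSup S with ht₁def
  have ht₀mem : t₀ ∈ Set.Icc a b := by
    constructor
    · exact le_csInf hSne fun t ht => (hSsub ht).1
    · exact (csInf_le hSbddB hSne.choose_spec).trans (hSsub hSne.choose_spec).2
  have ht₁mem : t₁ ∈ Set.Icc a b := by
    constructor
    · exact (hSsub hSne.choose_spec).1.trans (le_csSup hSbddA hSne.choose_spec)
    · exact csSup_le hSne fun t ht => (hSsub ht).2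
  have ht₀le : Metric.infDist (c t₀) Y ≤ D := by
    refine le_of_forall_pos_le_add fun ε hε => ?_
    obtain ⟨t, htS, htlt⟩ := Real.lt_sInf_add_pos hSne hε
    have h2 : Metric.infDist (c t₀) Y ≤ Metric.infDist (c t) Y + dist (c t₀) (c t) :=
      Metric.infDist_le_infDist_add_dist
    have hd : dist (c t₀) (c t) ≤ ε := by
      rw [hc.2 t₀ ht₀mem t (hSsub htS), abs_le]
      have := csInf_le hSbddB htS
      constructor <;> [linarith; linarith]
    have := htS.2
    simp only [nbhd, Set.mem_setOf_eq] at this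
    linarith
  have ht₁le : Metric.infDist (c t₁) Y ≤ D := by
    refine le_of_forall_pos_le_add fun ε hε => ?_
    obtain ⟨t, htS, htlt⟩ := Real.add_neg_lt_sSup hSne (by linarith : -ε < 0)
    have h2 : Metric.infDist (c t₁) Y ≤ Metric.infDist (c t) Y + dist (c t₁) (c t) :=
      Metric.infDist_le_infDist_add_dist
    have hd : dist (c t₁) (c t) ≤ ε := by
      rw [hc.2 t₁ ht₁mem t (hSsub htS), abs_le]
      have := le_csSup hSbddA htS
      constructor <;> [linarith; linarith]
    have := htS.2
    simp only [nbhd, Set.mem_setOf_eq] at this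
    linarith
  refine ⟨⟨tw, htw, htwD⟩, ?_, ?_⟩
  · -- entry
    refine aux_entry hD hYne hYcl hY hc ht₀mem hp ht₀le ?_
    intro t ht
    have htb : t ∈ Set.Icc a b := ⟨ht.1, ht.2.le.trans ht₀mem.2⟩
    by_contra hcon
    push_neg at hcon
    have : t ∈ S := ⟨htb, hcon⟩
    exact absurd (csInf_le hSbddB this) (not_le.2 ht.2)
  · -- exit: use reflected geodesic
    set c' : ℝ → X := fun t => c (a + b - t) with hc'def
    have hmap : ∀ t ∈ Set.Icc a b, a + b - t ∈ Set.Icc a b := by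
      intro t ht
      exact ⟨by linarith [ht.2], by linarith [ht.1]⟩
    have hc' : IsGeodesic c' a b := by
      refine ⟨hab, fun s hs t ht => ?_⟩
      simp only [hc'def]
      rw [hc.2 _ (hmap s hs) _ (hmap t ht)]
      rw [show a + b - s - (a + b - t) = t - s by ring, abs_sub_comm]
    have hc'a : c' a = c b := by simp [hc'def]
    have ht₀' : a + b - t₁ ∈ Set.Icc a b := hmap t₁ ht₁mem
    have hle' : Metric.infDist (c' (a + b - t₁)) Y ≤ D := by
      simp only [hc'def, show a + b - (a + b - t₁) = t₁ by ring]
      exact ht₁le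
    have hgt' : ∀ t ∈ Set.Ico a (a + b - t₁), D < Metric.infDist (c' t) Y := by
      intro t ht
      simp only [hc'def]
      set s := a + b - t with hsdef
      have hs1 : t₁ < s := by simp only [hsdef]; linarith [ht.2]
      have hsb : s ∈ Set.Icc a b := ⟨ht₁mem.1.trans hs1.le, by simp only [hsdef]; linarith [ht.1]⟩
      by_contra hcon
      push_neg at hcon
      have : s ∈ S := ⟨hsb, hcon⟩
      exact absurd (le_csSup hSbddA this) (not_le.2 hs1)
    have hp'' : p' ∈ projSet Y (c' a) := hc'a ▸ hp'
    have := aux_entry hD hYne hYcl hY hc' ht₀' hp'' hle' hgt'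
    simpa only [hc'def, show a + b - (a + b - t₁) = t₁ by ring] using this
end

section
/- Let X be a proper geodesic metric space, let D > 0, and let Y ⊆ X be a nonempty closed D-contracting subset. Then: (1) for every subset Z ⊆ X one has diam(Π_Y(Z)) ≤ diam(Z) + 4D (as an inequality in [0,∞]); (2) if p is a projection of a point x onto Y, then d(x,y) ≥ d(x,p) + d(p,y) − 4D for every y ∈ Y; (3) if p and p' are projections of points x and x' onto Y with d(p,p') > D, then d(x,x') ≥ d(x,p) + d(p,p') + d(p',x') − 8D. -/
/-!
Follow a geodesic from `x` until it first enters the closed `D`-neighbourhood of `Y`, at a point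
`m` within `D` of some `q ∈ Y`. Before that moment the geodesic stays `D`-far from `Y`, so
contraction puts the projection `p` of `x` within `D` of `q`. Hence, up to an additive error of
a few `D`, the projections onto `Y` lie on the geodesic, and the estimates are triangle
inequalities along it. A geodesic that never enters the neighbourhood has both endpoint
projections within `D` of each other, directly by contraction.
-/

open Metric Set

section Contracting

variable {X : Type*} [MetricSpace X]

lemma exists_first_le_of_lt {f : ℝ → ℝ} {a b D : ℝ} (hf : ContinuousOn f (Icc a b))
    (ha : D < f a) (hex : ∃ t ∈ Icc a b, f t ≤ D) :
    ∃ t ∈ Icc a b, f t ≤ D ∧ (∀ s ∈ Icc a t, D ≤ f s) ∧ ∀ s ∈ Icc a b, f s ≤ D → t ≤ s := by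
  set S := {t ∈ Icc a b | f t ≤ D}
  have hS : IsClosed S := hf.preimage_isClosed_of_isClosed isClosed_Icc isClosed_Iic
  have hbdd : BddBelow S := ⟨a, fun s hs => hs.1.1⟩
  have htS : sInf S ∈ S := hS.csInf_mem hex hbdd
  have hmin : ∀ s ∈ Icc a b, f s ≤ D → sInf S ≤ s := fun s hs hfs => csInf_le hbdd ⟨hs, hfs⟩
  refine ⟨sInf S, htS.1, htS.2, ?_, hmin⟩
  have hat : a ≠ sInf S := fun h => (h ▸ htS.2).not_gt ha
  have hT : IsClosed (Icc a (sInf S) ∩ f ⁻¹' Ici D) :=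
    (hf.mono (Icc_subset_Icc_right htS.1.2)).preimage_isClosed_of_isClosed isClosed_Icc
      isClosed_Ici
  have hIco : Ico a (sInf S) ⊆ Icc a (sInf S) ∩ f ⁻¹' Ici D := fun s hs =>
    ⟨Ico_subset_Icc_self hs, le_of_not_ge fun hfs =>
      (hmin s ⟨hs.1, hs.2.le.trans htS.1.2⟩ hfs).not_gt hs.2⟩
  intro s hs
  rw [← closure_Ico hat] at hs
  exact (hT.closure_subset_iff.2 hIco hs).2

namespace IsGeodesic

variable {c : ℝ → X} {a b : ℝ}

lemma mono (hc : IsGeodesic c a b) {a' b' : ℝ} (ha : a ≤ a') (hab : a' ≤ b') (hb : b' ≤ b) :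
    IsGeodesic c a' b' :=
  ⟨hab, fun s hs t ht =>
    hc.2 s ⟨ha.trans hs.1, hs.2.trans hb⟩ t ⟨ha.trans ht.1, ht.2.trans hb⟩⟩

lemma reverse (hc : IsGeodesic c a b) : IsGeodesic (fun t => c (a + b - t)) a b := by
  refine ⟨hc.1, fun s hs t ht => ?_⟩
  rw [hc.2 _ ⟨by linarith [hs.2], by linarith [hs.1]⟩ _ ⟨by linarith [ht.2], by linarith [ht.1]⟩,
    abs_sub_comm]
  ring_nf

lemma dist_eq (hc : IsGeodesic c a b) {s t : ℝ} (hs : s ∈ Icc a b) (ht : t ∈ Icc a b)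
    (hst : s ≤ t) : dist (c s) (c t) = t - s := by
  rw [hc.2 s hs t ht, abs_sub_comm, abs_of_nonneg (sub_nonneg.2 hst)]

lemma continuousOn (hc : IsGeodesic c a b) : ContinuousOn c (Icc a b) :=
  (LipschitzOnWith.of_dist_le_mul fun s hs t ht => by
    rw [hc.2 s hs t ht, NNReal.coe_one, one_mul, Real.dist_eq]).continuousOn

end IsGeodesic

section Projection

variable {Y : Set X}

lemma projSet_nonempty [ProperSpace X] (hY : IsClosed Y) (hne : Y.Nonempty) (x : X) :
    (projSet Y x).Nonempty := by
  obtain ⟨p, hp, hdist⟩ := hY.exists_infDist_eq_dist hne x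
  exact ⟨p, hp, hdist.symm⟩

lemma dist_le_of_mem_projSet {x p q : X} (hp : p ∈ projSet Y x) (hq : q ∈ Y) :
    dist x p ≤ dist x q :=
  hp.2 ▸ infDist_le_dist_of_mem hq

lemma diam_projOn_le {C : ℝ}
    (h : ∀ x x' p p', p ∈ projSet Y x → p' ∈ projSet Y x' → dist p p' ≤ dist x x' + C)
    (Z : Set X) : ediam (projOn Y Z) ≤ ediam Z + ENNReal.ofReal C := by
  refine ediam_le fun p hp p' hp' => ?_
  obtain ⟨x, hx, hpx⟩ := mem_iUnion₂.1 hp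
  obtain ⟨x', hx', hpx'⟩ := mem_iUnion₂.1 hp'
  calc edist p p' ≤ ENNReal.ofReal (dist x x' + C) := by
        rw [edist_dist]; exact ENNReal.ofReal_le_ofReal (h x x' p p' hpx hpx')
    _ ≤ edist x x' + ENNReal.ofReal C := by rw [edist_dist]; exact ENNReal.ofReal_add_le
    _ ≤ ediam Z + ENNReal.ofReal C := by gcongr; exact edist_le_ediam_of_mem hx hx'

end Projection

namespace IsContracting

variable {D : ℝ} {Y : Set X} {c : ℝ → X} {a b : ℝ}

lemma dist_le_of_far (hD : 0 ≤ D) (hY : IsContracting D Y) (hc : IsGeodesic c a b)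
    (hfar : ∀ t ∈ Icc a b, D ≤ infDist (c t) Y) {s t : ℝ} (hs : s ∈ Icc a b)
    (ht : t ∈ Icc a b) {p q : X} (hp : p ∈ projSet Y (c s)) (hq : q ∈ projSet Y (c t)) :
    dist p q ≤ D := by
  have hpq := (edist_le_ediam_of_mem (mem_biUnion (mem_image_of_mem c hs) hp)
    (mem_biUnion (mem_image_of_mem c ht) hq)).trans (hY c a b hc hfar)
  rwa [edist_dist, ENNReal.ofReal_le_ofReal_iff hD] at hpq

lemma exists_entry_time [ProperSpace X] (hD : 0 ≤ D) (hYcl : IsClosed Y) (hY : IsContracting D Y)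
    (hc : IsGeodesic c a b) {p : X} (hp : p ∈ projSet Y (c a))
    (hex : ∃ t ∈ Icc a b, infDist (c t) Y ≤ D) :
    ∃ t ∈ Icc a b, (∀ s ∈ Icc a b, infDist (c s) Y ≤ D → t ≤ s) ∧
      ∃ q ∈ Y, dist (c t) q ≤ D ∧ dist p q ≤ D := by
  by_cases hnear : infDist (c a) Y ≤ D
  · exact ⟨a, left_mem_Icc.2 hc.1, fun s hs _ => hs.1, p, hp.1, hp.2 ▸ hnear,
      (dist_self p).symm ▸ hD⟩
  obtain ⟨t, ht, hnear_t, hfar, hmin⟩ := exists_first_le_of_lt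
    ((continuous_infDist_pt Y).comp_continuousOn hc.continuousOn) (not_le.1 hnear) hex
  obtain ⟨q, hq⟩ := projSet_nonempty hYcl ⟨p, hp.1⟩ (c t)
  have hsub : IsGeodesic c a t := hc.mono le_rfl ht.1 ht.2
  exact ⟨t, ht, hmin, q, hq.1, hq.2 ▸ hnear_t,
    dist_le_of_far hD hY hsub hfar (left_mem_Icc.2 ht.1) (right_mem_Icc.2 ht.1) hp hq⟩

lemma proj_estimates_of_near [ProperSpace X] (hD : 0 ≤ D) (hYcl : IsClosed Y)
    (hY : IsContracting D Y) (hc : IsGeodesic c a b) {p p' : X} (hp : p ∈ projSet Y (c a))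
    (hp' : p' ∈ projSet Y (c b)) (hex : ∃ t ∈ Icc a b, infDist (c t) Y ≤ D) :
    dist p p' ≤ dist (c a) (c b) + 4 * D ∧
      dist (c a) p + dist p p' + dist p' (c b) ≤ dist (c a) (c b) + 6 * D := by
  obtain ⟨t₁, ht₁, hmin, q₁, hq₁, hmq₁, hpq₁⟩ := exists_entry_time hD hYcl hY hc hp hex
  have hp'rev : p' ∈ projSet Y (c (a + b - a)) := by rwa [add_sub_cancel_left]
  have hexrev : ∃ t ∈ Icc a b, infDist (c (a + b - t)) Y ≤ D :=
    ⟨a + b - t₁, ⟨by linarith [ht₁.2], by linarith [ht₁.1]⟩, by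
      rw [sub_sub_cancel]; exact (infDist_le_dist_of_mem hq₁).trans hmq₁⟩
  obtain ⟨t₂', ht₂', -, q₂, hq₂, hmq₂, hpq₂⟩ :=
    exists_entry_time hD hYcl hY hc.reverse hp'rev hexrev
  set t₂ := a + b - t₂'
  have ht₂ : t₂ ∈ Icc a b := ⟨by linarith [ht₂'.2], by linarith [ht₂'.1]⟩
  have ht₁₂ : t₁ ≤ t₂ := hmin t₂ ht₂ ((infDist_le_dist_of_mem hq₂).trans hmq₂)
  have ha := left_mem_Icc.2 hc.1
  have hb := right_mem_Icc.2 hc.1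
  have hab := hc.dist_eq ha hb hc.1
  have h₁ := hc.dist_eq ha ht₁ ht₁.1
  have h₁₂ := hc.dist_eq ht₁ ht₂ ht₁₂
  have h₂ := hc.dist_eq ht₂ hb ht₂.2
  have hxp : dist (c a) p ≤ t₁ - a + D := by
    linarith [dist_le_of_mem_projSet hp hq₁, dist_triangle (c a) (c t₁) q₁]
  have hx'p' : dist p' (c b) ≤ b - t₂ + D := by
    rw [dist_comm]
    linarith [dist_le_of_mem_projSet hp' hq₂, dist_triangle (c b) (c t₂) q₂, dist_comm (c b) (c t₂)]
  have hpp' : dist p p' ≤ t₂ - t₁ + 4 * D := by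
    linarith [dist_triangle4 p q₁ (c t₁) p', dist_triangle4 (c t₁) (c t₂) q₂ p',
      dist_comm q₁ (c t₁), dist_comm q₂ p']
  constructor <;> linarith [ht₁.1, ht₂.2, dist_nonneg (x := c a) (y := p),
    dist_nonneg (x := p') (y := c b)]

lemma dist_proj_le_or [ProperSpace X] (hX : GeodesicSpace X) (hD : 0 ≤ D) (hYcl : IsClosed Y)
    (hY : IsContracting D Y) {x x' p p' : X} (hp : p ∈ projSet Y x) (hp' : p' ∈ projSet Y x') :
    dist p p' ≤ D ∨ (dist p p' ≤ dist x x' + 4 * D ∧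
      dist x p + dist p p' + dist p' x' ≤ dist x x' + 6 * D) := by
  obtain ⟨a, b, c, hc, rfl, rfl⟩ := hX x x'
  by_cases hex : ∃ t ∈ Icc a b, infDist (c t) Y ≤ D
  · exact Or.inr (proj_estimates_of_near hD hYcl hY hc hp hp' hex)
  · push Not at hex
    exact Or.inl (dist_le_of_far hD hY hc (fun t ht => (hex t ht).le)
      (left_mem_Icc.2 hc.1) (right_mem_Icc.2 hc.1) hp hp')

lemma dist_add_dist_le [ProperSpace X] (hX : GeodesicSpace X) (hD : 0 ≤ D) (hYcl : IsClosed Y)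
    (hY : IsContracting D Y) {x p y : X} (hp : p ∈ projSet Y x) (hy : y ∈ Y) :
    dist x p + dist p y ≤ dist x y + 3 * D := by
  obtain ⟨a, b, c, hc, rfl, rfl⟩ := hX x y
  have hb := right_mem_Icc.2 hc.1
  have hex : ∃ t ∈ Icc a b, infDist (c t) Y ≤ D := ⟨b, hb, by rwa [infDist_zero_of_mem hy]⟩
  obtain ⟨t, ht, -, q, hq, hmq, hpq⟩ := exists_entry_time hD hYcl hY hc hp hex
  have hsplit : dist (c a) (c b) = dist (c a) (c t) + dist (c t) (c b) := by
    rw [hc.dist_eq (left_mem_Icc.2 hc.1) hb hc.1, hc.dist_eq (left_mem_Icc.2 hc.1) ht ht.1,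
      hc.dist_eq ht hb ht.2]
    ring
  linarith [dist_le_of_mem_projSet hp hq, dist_triangle (c a) (c t) q,
    dist_triangle4 p q (c t) (c b), dist_comm q (c t)]

end IsContracting

end Contracting

theorem stmt11_general {X : Type*} [MetricSpace X] [ProperSpace X] (hX : GeodesicSpace X)
    (D : ℝ) (hD : 0 < D) (Y : Set X) (hYcl : IsClosed Y)
    (hY : IsContracting D Y) :
    (∀ Z : Set X, EMetric.diam (projOn Y Z) ≤ EMetric.diam Z + ENNReal.ofReal (4 * D)) ∧
    (∀ (x p : X), p ∈ projSet Y x → ∀ y ∈ Y,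
      dist x p + dist p y - 4 * D ≤ dist x y) ∧
    (∀ (x x' p p' : X), p ∈ projSet Y x → p' ∈ projSet Y x' → D < dist p p' →
      dist x p + dist p p' + dist p' x' - 8 * D ≤ dist x x') := by
  refine ⟨diam_projOn_le fun x x' p p' hp hp' => ?_, fun x p hp y hy => ?_,
    fun x x' p p' hp hp' hpp' => ?_⟩
  · rcases hY.dist_proj_le_or hX hD.le hYcl hp hp' with h | h
    · linarith [dist_nonneg (x := x) (y := x')]
    · exact h.1
  · linarith [hY.dist_add_dist_le hX hD.le hYcl hp hy]
  · rcases hY.dist_proj_le_or hX hD.le hYcl hp hp' with h | h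
    · linarith
    · linarith [h.2]

theorem stmt11 {X : Type*} [MetricSpace X] [ProperSpace X] (hX : GeodesicSpace X)
    (D : ℝ) (hD : 0 < D) (Y : Set X) (hYne : Y.Nonempty) (hYcl : IsClosed Y)
    (hY : IsContracting D Y) :
    (∀ Z : Set X, EMetric.diam (projOn Y Z) ≤ EMetric.diam Z + ENNReal.ofReal (4 * D)) ∧
    (∀ (x p : X), p ∈ projSet Y x → ∀ y ∈ Y,
      dist x p + dist p y - 4 * D ≤ dist x y) ∧
    (∀ (x x' p p' : X), p ∈ projSet Y x → p' ∈ projSet Y x' → D < dist p p' →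
      dist x p + dist p p' + dist p' x' - 8 * D ≤ dist x x') :=
  stmt11_general hX D hD Y hYcl hY
end

section
/- Let X be a proper geodesic metric space, let D > 0, and let Y and Z be nonempty closed D-contracting subsets of X. Then for every A ≥ 0 one has diam(Y^{+A} ∩ Z^{+A}) ≤ diam(Π_Y(Z)) + 2A + 22D (as an inequality in [0,∞]). -/
/-- Existence of a projection onto a closed nonempty set in a proper space. -/
lemma exists_projSet {X : Type*} [MetricSpace X] [ProperSpace X] {Y : Set X}
    (hYcl : IsClosed Y) (hYne : Y.Nonempty) (x : X) : ∃ p, p ∈ projSet Y x := by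
  obtain ⟨p, hp, hd⟩ := hYcl.exists_infDist_eq_dist hYne x
  exact ⟨p, hp, hd.symm⟩

/-- Key lemma: a point close to both `Y` and `Z` is close to `Π_Y(Z)`. -/
lemma close_to_proj {X : Type*} [MetricSpace X] [ProperSpace X] (hX : GeodesicSpace X)
    {D : ℝ} (hD : 0 < D) {Y Z : Set X}
    (hYne : Y.Nonempty) (hYcl : IsClosed Y) (hY : IsContracting D Y)
    (hZne : Z.Nonempty) (hZcl : IsClosed Z)
    {A : ℝ} (hA : 0 ≤ A) {x : X} (hxY : Metric.infDist x Y ≤ A)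
    (hxZ : Metric.infDist x Z ≤ A) :
    ∃ r ∈ projOn Y Z, dist x r ≤ A + 3 * D := by
  -- choose a nearest point z ∈ Z
  obtain ⟨z, hzZ, hzd⟩ := hZcl.exists_infDist_eq_dist hZne x
  have hxz : dist x z ≤ A := by rw [← hzd]; exact hxZ
  -- a geodesic from x to z
  obtain ⟨a, b, c, hc, hca, hcb⟩ := hX x z
  obtain ⟨hab, hgeo⟩ := hc
  have haI : a ∈ Set.Icc a b := ⟨le_refl a, hab⟩
  have hbI : b ∈ Set.Icc a b := ⟨hab, le_refl b⟩
  have hba : b - a ≤ A := by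
    have h := hgeo a haI b hbI
    rw [hca, hcb, abs_sub_comm, abs_of_nonneg (by linarith)] at h
    linarith
  have key : ∀ s' ∈ Set.Icc a b,
      (∀ t ∈ Set.Icc s' b, D ≤ Metric.infDist (c t) Y) →
      dist x (c s') + Metric.infDist (c s') Y ≤ A + 2 * D →
      ∃ r ∈ projOn Y Z, dist x r ≤ A + 3 * D := by
    intro s' hs' hfar hnear
    -- the restricted geodesic on [s', b]
    have hgeo' : IsGeodesic c s' b :=
      ⟨hs'.2, fun u hu v hv => hgeo u ⟨hs'.1.trans hu.1, hu.2⟩ v ⟨hs'.1.trans hv.1, hv.2⟩⟩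
    have hdiam := hY c s' b hgeo' hfar
    obtain ⟨q, hq⟩ := exists_projSet hYcl hYne (c s')
    obtain ⟨r, hr⟩ := exists_projSet hYcl hYne z
    have hqmem : q ∈ projOn Y (c '' Set.Icc s' b) :=
      Set.mem_biUnion ⟨s', ⟨le_refl s', hs'.2⟩, rfl⟩ hq
    have hrmem : r ∈ projOn Y (c '' Set.Icc s' b) := by
      have hmem : c b ∈ c '' Set.Icc s' b := ⟨b, ⟨hs'.2, le_refl b⟩, rfl⟩
      refine Set.mem_biUnion hmem ?_
      rw [hcb]; exact hr
    have hqr : dist q r ≤ D := by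
      have h1 : edist q r ≤ ENNReal.ofReal D :=
        le_trans (EMetric.edist_le_diam_of_mem hqmem hrmem) hdiam
      rw [edist_dist] at h1
      exact (ENNReal.ofReal_le_ofReal_iff hD.le).mp h1
    refine ⟨r, Set.mem_biUnion hzZ hr, ?_⟩
    have hq2 : dist (c s') q = Metric.infDist (c s') Y := hq.2
    calc dist x r ≤ dist x (c s') + dist (c s') r := dist_triangle _ _ _
      _ ≤ dist x (c s') + (dist (c s') q + dist q r) := by
          linarith [dist_triangle (c s') q r]
      _ ≤ A + 3 * D := by linarith
  by_cases hcase : ∀ t ∈ Set.Icc a b, D ≤ Metric.infDist (c t) Y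
  · -- the whole geodesic stays far from Y
    refine key a haI hcase ?_
    have hpx : Metric.infDist (c a) Y ≤ A := by rw [hca]; exact hxY
    have : dist x (c a) = 0 := by rw [hca, dist_self]
    linarith
  · push_neg at hcase
    obtain ⟨t₀, ht₀I, ht₀⟩ := hcase
    -- s = sup of times where the geodesic is ≤ D from Y
    set S : Set ℝ := {t ∈ Set.Icc a b | Metric.infDist (c t) Y ≤ D} with hS
    have hSne : S.Nonempty := ⟨t₀, ht₀I, ht₀.le⟩
    have hSbdd : BddAbove S := ⟨b, fun t ht => ht.1.2⟩
    set s := sSup S with hs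
    have ht₀S : t₀ ∈ S := ⟨ht₀I, ht₀.le⟩
    have hsI : s ∈ Set.Icc a b :=
      ⟨ht₀I.1.trans (le_csSup hSbdd ht₀S : t₀ ≤ s),
       csSup_le hSne fun t ht => ht.1.2⟩
    have hsD : Metric.infDist (c s) Y ≤ D := by
      refine le_of_forall_pos_le_add fun ε hε => ?_
      obtain ⟨t, htS, hts⟩ := exists_lt_of_lt_csSup hSne (by linarith : s - ε < s)
      have h1 : Metric.infDist (c s) Y ≤ Metric.infDist (c t) Y + dist (c s) (c t) :=
        Metric.infDist_le_infDist_add_dist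
      have h2 : dist (c s) (c t) = |s - t| := hgeo s hsI t htS.1
      have h3 : t ≤ s := le_csSup hSbdd htS
      rw [h2, abs_of_nonneg (by linarith)] at h1
      have := htS.2
      linarith
    by_cases hsb : s = b
    · -- z itself is within D of Y
      obtain ⟨r, hr⟩ := exists_projSet hYcl hYne z
      refine ⟨r, Set.mem_biUnion hzZ hr, ?_⟩
      have hzr : dist z r ≤ D := by
        rw [hr.2, ← hcb, ← hsb]; exact hsD
      calc dist x r ≤ dist x z + dist z r := dist_triangle _ _ _
        _ ≤ A + 3 * D := by linarith
    · have hsb' : s < b := lt_of_le_of_ne hsI.2 hsb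
      set s' := min (s + D) b with hs'
      have hss' : s < s' := lt_min (by linarith) hsb'
      have hs'I : s' ∈ Set.Icc a b := ⟨hsI.1.trans (le_of_lt hss'), min_le_right _ _⟩
      have hxcs : dist x (c s') ≤ A := by
        have h := hgeo a haI s' hs'I
        rw [hca] at h
        rw [h, abs_sub_comm, abs_of_nonneg (by linarith [hs'I.1] : (0:ℝ) ≤ s' - a)]
        linarith [hs'I.2]
      refine key s' hs'I ?_ ?_
      · intro t ht
        have hts : s < t := lt_of_lt_of_le hss' ht.1
        by_contra hcon
        push_neg at hcon
        have : t ∈ S := ⟨⟨hs'I.1.trans ht.1, ht.2⟩, hcon.le⟩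
        exact absurd (le_csSup hSbdd this) (not_le.mpr hts)
      · have h1 : Metric.infDist (c s') Y ≤ Metric.infDist (c s) Y + dist (c s') (c s) :=
          Metric.infDist_le_infDist_add_dist
        have h2 : dist (c s') (c s) = |s' - s| := hgeo s' hs'I s hsI
        have h3 : s' ≤ s + D := min_le_left _ _
        rw [h2, abs_of_nonneg (by linarith)] at h1
        linarith

theorem stmt13 {X : Type*} [MetricSpace X] [ProperSpace X] (hX : GeodesicSpace X)
    (D : ℝ) (hD : 0 < D) (Y Z : Set X)
    (hYne : Y.Nonempty) (hYcl : IsClosed Y) (hY : IsContracting D Y)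
    (hZne : Z.Nonempty) (hZcl : IsClosed Z) (hZ : IsContracting D Z)
    (A : ℝ) (hA : 0 ≤ A) :
    EMetric.diam (nbhd Y A ∩ nbhd Z A) ≤
      EMetric.diam (projOn Y Z) + ENNReal.ofReal (2 * A + 22 * D) := by
  refine EMetric.diam_le fun x hx x' hx' => ?_
  obtain ⟨r, hrmem, hr⟩ := close_to_proj hX hD hYne hYcl hY hZne hZcl hA hx.1 hx.2
  obtain ⟨r', hrmem', hr'⟩ := close_to_proj hX hD hYne hYcl hY hZne hZcl hA hx'.1 hx'.2
  calc edist x x' ≤ edist x r + edist r r' + edist r' x' := edist_triangle4 _ _ _ _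
    _ ≤ ENNReal.ofReal (A + 3 * D) + EMetric.diam (projOn Y Z)
          + ENNReal.ofReal (A + 3 * D) := by
        gcongr
        · rw [edist_dist]; exact ENNReal.ofReal_le_ofReal hr
        · exact EMetric.edist_le_diam_of_mem hrmem hrmem'
        · rw [edist_dist, dist_comm]; exact ENNReal.ofReal_le_ofReal hr'
    _ = EMetric.diam (projOn Y Z)
          + (ENNReal.ofReal (A + 3 * D) + ENNReal.ofReal (A + 3 * D)) := by ring
    _ ≤ EMetric.diam (projOn Y Z) + ENNReal.ofReal (2 * A + 22 * D) := by
        gcongr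
        rw [← ENNReal.ofReal_add (by linarith) (by linarith)]
        exact ENNReal.ofReal_le_ofReal (by linarith)
end

section
/- Let X be a proper geodesic metric space, let D > 0, and let Y ⊆ X be a nonempty closed D-contracting subset. Let x, x' ∈ X, let c be a geodesic from x to x' that intersects Y, and let y be a projection of x onto Y. Then d(x,y) + d(y,x') ≤ d(x,x') + 4D. -/
theorem stmt15 {X : Type*} [MetricSpace X] [ProperSpace X] (hX : GeodesicSpace X)
    (D : ℝ) (hD : 0 < D) (Y : Set X) (hYne : Y.Nonempty) (hYcl : IsClosed Y)
    (hY : IsContracting D Y)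
    (x x' : X) (c : ℝ → X) (a b : ℝ) (hc : IsGeodesic c a b)
    (hca : c a = x) (hcb : c b = x') (hmeet : ∃ t ∈ Set.Icc a b, c t ∈ Y)
    (y : X) (hy : y ∈ projSet Y x) :
    dist x y + dist y x' ≤ dist x x' + 4 * D := by
  obtain ⟨hab, hgeo⟩ := hc
  have hxy : dist x y = Metric.infDist x Y := hy.2
  have hxx' : dist x x' = b - a := by
    rw [← hca, ← hcb, hgeo a ⟨le_refl a, hab⟩ b ⟨hab, le_refl b⟩,
      abs_sub_comm, abs_of_nonneg (by linarith)]
  by_cases hcase : Metric.infDist x Y ≤ D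
  · -- easy case
    have h1 : dist y x' ≤ D + dist x x' := by
      calc dist y x' ≤ dist y x + dist x x' := dist_triangle _ _ _
        _ ≤ D + dist x x' := by rw [dist_comm, hxy]; linarith
    linarith [hxy ▸ hcase]
  push_neg at hcase
  -- continuity of f = infDist (c ·) Y on [a,b]
  have hcont : ContinuousOn c (Set.Icc a b) := by
    rw [Metric.continuousOn_iff]
    intro u hu ε hε
    exact ⟨ε, hε, fun v hv hd => by
      rw [hgeo v hv u hu]; rwa [Real.dist_eq] at hd⟩
  set f : ℝ → ℝ := fun t => Metric.infDist (c t) Y with hf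
  have hfcont : ContinuousOn f (Set.Icc a b) :=
    (Metric.continuous_infDist_pt Y).comp_continuousOn hcont
  set S : Set ℝ := Set.Icc a b ∩ f ⁻¹' Set.Iic D with hS
  have hSclosed : IsClosed S :=
    hfcont.preimage_isClosed_of_isClosed isClosed_Icc isClosed_Iic
  have hScompact : IsCompact S :=
    isCompact_Icc.of_isClosed_subset hSclosed Set.inter_subset_left
  obtain ⟨t0, ht0, ht0Y⟩ := hmeet
  have hSne : S.Nonempty := by
    refine ⟨t0, ht0, ?_⟩
    simp only [Set.mem_preimage, Set.mem_Iic, hf]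
    rw [Metric.infDist_zero_of_mem ht0Y]; exact hD.le
  set s := sInf S with hs
  have hsS : s ∈ S := hScompact.sInf_mem hSne
  have hsab : s ∈ Set.Icc a b := hsS.1
  have hslb : ∀ t ∈ S, s ≤ t := fun t ht => csInf_le hScompact.bddBelow ht
  have haS : a ∉ S := by
    intro h
    have : f a ≤ D := h.2
    rw [hf] at this; simp only at this
    rw [hca] at this; linarith
  have has : a < s := lt_of_le_of_ne hsab.1 (fun h => haS (h ▸ hsS))
  have hIco : ∀ t ∈ Set.Ico a s, D ≤ f t := by
    intro t ht
    have htab : t ∈ Set.Icc a b := ⟨ht.1, ht.2.le.trans hsab.2⟩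
    by_contra h
    push_neg at h
    exact absurd (hslb t ⟨htab, le_of_lt h⟩) (not_le.mpr ht.2)
  have hfs : D ≤ f s := by
    have hne : Filter.NeBot (nhdsWithin s (Set.Ico a s)) := by
      rw [← mem_closure_iff_nhdsWithin_neBot, closure_Ico has.ne]
      exact ⟨has.le, le_refl s⟩
    have htend : Filter.Tendsto f (nhdsWithin s (Set.Ico a s)) (nhds (f s)) :=
      (hfcont s hsab).mono (fun u hu => ⟨hu.1, hu.2.le.trans hsab.2⟩)
    exact ge_of_tendsto htend (Filter.eventually_of_mem self_mem_nhdsWithin hIco)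
  have hIcc : ∀ t ∈ Set.Icc a s, D ≤ f t := by
    intro t ht
    rcases eq_or_lt_of_le ht.2 with h | h
    · exact h ▸ hfs
    · exact hIco t ⟨ht.1, h⟩
  -- apply contracting property on [a,s]
  have hsub : Set.Icc a s ⊆ Set.Icc a b := Set.Icc_subset_Icc (le_refl a) hsab.2
  have hgeo' : IsGeodesic c a s :=
    ⟨has.le, fun u hu v hv => hgeo u (hsub hu) v (hsub hv)⟩
  have hdiam := hY c a s hgeo' hIcc
  obtain ⟨p, hpY, hpd⟩ := hYcl.exists_infDist_eq_dist hYne (c s)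
  have hyP : y ∈ projOn Y (c '' Set.Icc a s) := by
    simp only [projOn, Set.mem_iUnion]
    exact ⟨x, ⟨⟨a, ⟨le_refl a, has.le⟩, hca⟩, hy⟩⟩
  have hpP : p ∈ projOn Y (c '' Set.Icc a s) := by
    simp only [projOn, Set.mem_iUnion]
    exact ⟨c s, ⟨⟨s, ⟨has.le, le_refl s⟩, rfl⟩, hpY, hpd.symm⟩⟩
  have hyp : dist y p ≤ D := by
    have := (EMetric.edist_le_diam_of_mem hyP hpP).trans hdiam
    rw [edist_dist] at this
    exact (ENNReal.ofReal_le_ofReal_iff hD.le).mp this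
  have hcsp : dist (c s) p ≤ D := by rw [← hpd]; exact hsS.2
  have hdxs : dist x (c s) = s - a := by
    rw [← hca, hgeo a ⟨le_refl a, hab⟩ s hsab, abs_sub_comm,
      abs_of_nonneg (by linarith)]
  have hdsx' : dist (c s) x' = b - s := by
    rw [← hcb, hgeo s hsab b ⟨hab, le_refl b⟩, abs_sub_comm,
      abs_of_nonneg (by linarith [hsab.2])]
  have h1 : dist x y ≤ (s - a) + D := by
    rw [hxy]
    calc Metric.infDist x Y ≤ Metric.infDist (c s) Y + dist x (c s) :=
          Metric.infDist_le_infDist_add_dist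
      _ ≤ D + (s - a) := add_le_add hsS.2 hdxs.le
      _ = (s - a) + D := by ring
  have h2 : dist y x' ≤ D + D + (b - s) := by
    calc dist y x' ≤ dist y p + dist p (c s) + dist (c s) x' :=
          dist_triangle4 _ _ _ _
      _ ≤ D + D + (b - s) := by
          rw [dist_comm p (c s)]
          exact add_le_add (add_le_add hyp hcsp) hdsx'.le
  linarith
end

section
/- Let T be a tree (a connected simple graph with no cycles), let f be a graph automorphism of T, and let v, w be vertices of T such that v is not f-periodic, i.e. f^k(v) ≠ v for every k ≥ 1. Then there exist n₀ ∈ ℕ and a vertex u adjacent to v such that for every n ≥ n₀, the vertex u lies on the unique reduced path from v to f^n(w); in particular, the first edge of the geodesic from v to f^n(w) is independent of n for n ≥ n₀. -/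
/-!
Let `r` be a walk from `w` to `f w`. Its images under the iterates `fⁿ` join `fⁿ w` to `fⁿ⁺¹ w`,
and since `v` is not periodic, each vertex of `r` is sent to `v` by at most one iterate; so from
some `n₀` on these walks avoid `v`. Concatenating them, all `fⁿ w` with `n ≥ n₀` lie in one
component of `T - v`, which is attached to `v` through a single neighbour `u`, and in a tree the
path from `v` to any vertex of that component starts with the edge `v u`.
-/

open Filter Function

namespace Function

variable {α : Type*} {f : α → α} {v : α}

lemma subsingleton_setOf_iterate_eq (hv : v ∉ periodicPts f) (x : α) :
    {n | f^[n] x = v}.Subsingleton := by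
  have not_both : ∀ m n, m < n → f^[m] x = v → f^[n] x ≠ v := by
    intro m n hmn hm hn
    have h := iterate_add_apply f (n - m) m x
    rw [Nat.sub_add_cancel hmn.le, hn, hm] at h
    exact hv (mk_mem_periodicPts (by omega) h.symm)
  intro m hm n hn
  rcases lt_trichotomy m n with h | h | h
  · exact absurd hn (not_both m n h hm)
  · exact h
  · exact absurd hm (not_both n m h hn)

lemma eventually_notMem_image_iterate (hv : v ∉ periodicPts f) {S : Set α} (hS : S.Finite) :
    ∀ᶠ n in atTop, v ∉ f^[n] '' S := by
  have hfin : {n | v ∈ f^[n] '' S}.Finite := by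
    have : {n | v ∈ f^[n] '' S} = ⋃ x ∈ S, {n | f^[n] x = v} := by ext; simp
    exact this ▸ hS.biUnion fun x _ => (subsingleton_setOf_iterate_eq hv x).finite
  simpa [← Nat.cofinite_eq_atTop] using hfin.eventually_cofinite_notMem

end Function

namespace SimpleGraph

variable {V : Type*} {G : SimpleGraph V}

lemma Walk.exists_support_eq_map_iterate (f : G →g G) {a b : V} (p : G.Walk a b) (n : ℕ) :
    ∃ q : G.Walk (f^[n] a) (f^[n] b), q.support = p.support.map f^[n] := by
  induction n generalizing a b with
  | zero => exact ⟨p, by simp⟩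
  | succ n ih =>
    obtain ⟨q, hq⟩ := ih (p.map f)
    exact ⟨q, hq.trans (by rw [Walk.support_map, List.map_map]; rfl)⟩

lemma Connected.exists_adj_walk_notMem_support (hG : G.Connected) {v a : V} (hva : v ≠ a) :
    ∃ u, G.Adj v u ∧ ∃ q : G.Walk u a, v ∉ q.support := by
  obtain ⟨p, hp⟩ := (hG v a).exists_isPath
  cases p with
  | nil => exact absurd rfl hva
  | cons h q => exact ⟨_, h, q, ((Walk.cons_isPath_iff h q).mp hp).2⟩

lemma Connected.exists_adj_forall_walk_notMem_support (hG : G.Connected) {v : V} {b : ℕ → V}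
    {n₀ : ℕ} (hb : ∀ n ≥ n₀, ∃ r : G.Walk (b n) (b (n + 1)), v ∉ r.support) :
    ∃ u, G.Adj v u ∧ ∀ n ≥ n₀, ∃ q : G.Walk u (b n), v ∉ q.support := by
  obtain ⟨r, hr⟩ := hb n₀ le_rfl
  have hne : v ≠ b n₀ := fun h => hr (h ▸ r.start_mem_support)
  obtain ⟨u, hvu, q₀, hq₀⟩ := hG.exists_adj_walk_notMem_support hne
  refine ⟨u, hvu, fun n hn => ?_⟩
  induction n, hn using Nat.le_induction with
  | base => exact ⟨q₀, hq₀⟩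
  | succ n hn ih =>
    obtain ⟨q, hq⟩ := ih
    obtain ⟨r, hr⟩ := hb n hn
    refine ⟨q.append r, fun h => ?_⟩
    rw [Walk.support_append, List.mem_append] at h
    exact h.elim hq fun h => hr (List.mem_of_mem_tail h)

lemma IsAcyclic.mem_support_of_walk_notMem_support (hG : G.IsAcyclic) {v u b : V}
    (hvu : G.Adj v u) (q : G.Walk u b) (hq : v ∉ q.support) {p : G.Walk v b} (hp : p.IsPath) :
    u ∈ p.support := by
  classical
  have hpath : (Walk.cons hvu q.bypass).IsPath := (Walk.cons_isPath_iff _ _).mpr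
    ⟨q.bypass_isPath, fun h => hq (q.support_bypass_subset_support h)⟩
  obtain rfl : p = Walk.cons hvu q.bypass :=
    congrArg Subtype.val ((hG.subsingleton_path v b).elim ⟨p, hp⟩ ⟨_, hpath⟩)
  simp

end SimpleGraph

theorem stmt18 {V : Type*} (T : SimpleGraph V) (hconn : T.Connected)
    (hacyclic : T.IsAcyclic) (f : T ≃g T) (v w : V)
    (hv : ∀ k : ℕ, 1 ≤ k → (fun z : V => f z)^[k] v ≠ v) :
    ∃ (n₀ : ℕ) (u : V), T.Adj v u ∧
      ∀ n : ℕ, n₀ ≤ n →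
        ∀ p : T.Walk v ((fun z : V => f z)^[n] w), p.IsPath → u ∈ p.support := by
  obtain ⟨r⟩ := hconn w (f w)
  have hv' : v ∉ periodicPts fun z : V => f z := fun ⟨k, hk, hper⟩ => hv k hk hper
  obtain ⟨n₀, hn₀⟩ :=
    (eventually_notMem_image_iterate hv' r.support.finite_toSet).exists_forall_of_atTop
  have hstep : ∀ n ≥ n₀,
      ∃ r' : T.Walk ((fun z : V => f z)^[n] w) ((fun z : V => f z)^[n + 1] w), v ∉ r'.support := by
    intro n hn
    obtain ⟨r', hr'⟩ := r.exists_support_eq_map_iterate f.toHom n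
    exact ⟨r', by simpa [hr'] using hn₀ n hn⟩
  obtain ⟨u, hvu, hu⟩ := hconn.exists_adj_forall_walk_notMem_support hstep
  refine ⟨n₀, u, hvu, fun n hn p hp => ?_⟩
  obtain ⟨q, hq⟩ := hu n hn
  exact hacyclic.mem_support_of_walk_notMem_support hvu q hq hp
end
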